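/- arXiv:1803.09116 — 4 statements merged into one kernel-verified Lean document; each statement's English description precedes it below -/
import Mathlib

section
/- Let f : A → F_y be a surjective homomorphism and g : F_x → A a surjective homomorphism of algebras (in some variety), where F_y is free over a set ȳ and F_x is free over x̄, and let r : F_y → F_x and s : F_x → F_y be homomorphisms satisfying f = g ∘ r and g = f ∘ s. If ker(g) is generated as a congruence by Π ⊆ F_x², then ker(f) is generated as a congruence by Σ = {(s(a), s(b)) | (a,b) ∈ Π} ∪ {(y, s(r(y))) | y ∈ ȳ}. -/
/-- An algebraic signature: a type of operation symbols with arities. -/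
structure Signature where
  Op : Type
  arity : Op → ℕ

/-- Terms over a signature with variables from `X`. -/
inductive Term (σ : Signature) (X : Type) : Type where
  | var : X → Term σ X
  | op : (o : σ.Op) → (Fin (σ.arity o) → Term σ X) → Term σ X

/-- An algebra for the signature `σ`. -/
structure Alg (σ : Signature) where
  carrier : Type
  interp : (o : σ.Op) → (Fin (σ.arity o) → carrier) → carrier

/-- Evaluation of a term in an algebra under a valuation. -/
def Term.eval {σ : Signature} {X : Type} (A : Alg σ) (v : X → A.carrier) :
    Term σ X → A.carrier
  | .var x => v x
  | .op o ts => A.interp o fun i => (ts i).eval A v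

/-- Homomorphisms of algebras. -/
structure Hom {σ : Signature} (A B : Alg σ) where
  toFun : A.carrier → B.carrier
  map_op : ∀ (o : σ.Op) (as : Fin (σ.arity o) → A.carrier),
    toFun (A.interp o as) = B.interp o fun i => toFun (as i)

/-- An equational theory (defining a variety). -/
structure EqTheory (σ : Signature) where
  eqs : Set (Term σ ℕ × Term σ ℕ)

/-- `A` is a model of the equational theory `E`, i.e. a member of the variety. -/
def Alg.Models {σ : Signature} (A : Alg σ) (E : EqTheory σ) : Prop :=
  ∀ p ∈ E.eqs, ∀ v : ℕ → A.carrier, p.1.eval A v = p.2.eval A v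

/-- Equational consequence: `s ≈ t` holds in every member of the variety. -/
def TermRel (σ : Signature) (E : EqTheory σ) (X : Type) (s t : Term σ X) : Prop :=
  ∀ A : Alg σ, A.Models E → ∀ v : X → A.carrier, s.eval A v = t.eval A v

def freeSetoid (σ : Signature) (E : EqTheory σ) (X : Type) : Setoid (Term σ X) where
  r := TermRel σ E X
  iseqv := ⟨fun _ _ _ _ => rfl, fun h A hA v => (h A hA v).symm,
    fun h1 h2 A hA v => (h1 A hA v).trans (h2 A hA v)⟩

def FreeCarrier (σ : Signature) (E : EqTheory σ) (X : Type) : Type :=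
  Quotient (freeSetoid σ E X)

/-- The free algebra of the variety axiomatised by `E` over the set `X` of generators. -/
noncomputable def FreeAlg (σ : Signature) (E : EqTheory σ) (X : Type) : Alg σ where
  carrier := FreeCarrier σ E X
  interp o as := Quotient.mk (freeSetoid σ E X) (Term.op o fun i => Quotient.out (as i))

/-- The generator `x` of the free algebra. -/
def FreeAlg.gen (σ : Signature) (E : EqTheory σ) (X : Type) (x : X) :
    (FreeAlg σ E X).carrier :=
  Quotient.mk (freeSetoid σ E X) (Term.var x)

def Term.rename {σ : Signature} {X Y : Type} (h : X → Y) : Term σ X → Term σ Y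
  | .var x => .var (h x)
  | .op o ts => .op o fun i => (ts i).rename h

theorem Term.eval_rename {σ : Signature} {X Y : Type} (A : Alg σ) (h : X → Y)
    (v : Y → A.carrier) : ∀ t : Term σ X, (t.rename h).eval A v = t.eval A (v ∘ h)
  | .var _ => rfl
  | .op o ts => by
      show A.interp o _ = A.interp o _
      exact congrArg _ (funext fun i => Term.eval_rename A h v (ts i))

/-- The natural map between free algebras induced by a map of variables. -/
def FreeAlg.rename {σ : Signature} {E : EqTheory σ} {X Y : Type} (h : X → Y) :
    (FreeAlg σ E X).carrier → (FreeAlg σ E Y).carrier :=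
  Quotient.lift (fun t : Term σ X => Quotient.mk (freeSetoid σ E Y) (t.rename h))
    (fun s t hst => Quotient.sound (fun A hA v => by
      rw [Term.eval_rename, Term.eval_rename]; exact hst A hA (v ∘ h)))

/-- Congruences on an algebra. -/
def IsCong {σ : Signature} (A : Alg σ) (r : A.carrier → A.carrier → Prop) : Prop :=
  Equivalence r ∧ ∀ (o : σ.Op) (as bs : Fin (σ.arity o) → A.carrier),
    (∀ i, r (as i) (bs i)) → r (A.interp o as) (A.interp o bs)

/-- The congruence generated by a set of pairs. -/
def cgGen {σ : Signature} (A : Alg σ) (S : Set (A.carrier × A.carrier)) :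
    A.carrier → A.carrier → Prop :=
  fun a b => ∀ r, IsCong A r → (∀ p ∈ S, r p.1 p.2) → r a b

/-- The kernel congruence of a homomorphism. -/
def kerHom {σ : Signature} {A B : Alg σ} (f : Hom A B) :
    A.carrier → A.carrier → Prop :=
  fun a b => f.toFun a = f.toFun b

/-- A relation is a compact (finitely generated) congruence. -/
def CompactRel {σ : Signature} (A : Alg σ) (Θ : A.carrier → A.carrier → Prop) : Prop :=
  ∃ S : Set (A.carrier × A.carrier), S.Finite ∧ Θ = cgGen A S

def FinGenerated (σ : Signature) (E : EqTheory σ) (A : Alg σ) : Prop :=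
  ∃ (n : ℕ) (f : Hom (FreeAlg σ E (Fin n)) A), Function.Surjective f.toFun

/-- `A` is finitely presented: a quotient of a finitely generated free algebra by a
compact congruence. -/
def FinPresented (σ : Signature) (E : EqTheory σ) (A : Alg σ) : Prop :=
  ∃ (n : ℕ) (f : Hom (FreeAlg σ E (Fin n)) A),
    Function.Surjective f.toFun ∧ CompactRel (FreeAlg σ E (Fin n)) (kerHom f)

def IsSubalg {σ : Signature} (A : Alg σ) (S : Set A.carrier) : Prop :=
  ∀ (o : σ.Op) (as : Fin (σ.arity o) → A.carrier), (∀ i, as i ∈ S) → A.interp o as ∈ S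

/-- The subuniverse generated by `G`. -/
def subGen {σ : Signature} (A : Alg σ) (G : Set A.carrier) : Set A.carrier :=
  {a | ∀ T, IsSubalg A T → G ⊆ T → a ∈ T}

/-- The subalgebra on a closed subset. -/
def Alg.subAlg {σ : Signature} (A : Alg σ) (S : Set A.carrier) (hS : IsSubalg A S) :
    Alg σ where
  carrier := ↥S
  interp o as := ⟨A.interp o fun i => (as i).1, hS o _ fun i => (as i).2⟩

/-- A variety is coherent if every finitely generated subalgebra of a finitely
presented member is finitely presented. -/
def Coherent (σ : Signature) (E : EqTheory σ) : Prop :=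
  ∀ B : Alg σ, B.Models E → FinPresented σ E B →
    ∀ (S : Set B.carrier) (hS : IsSubalg B S),
      (∃ G : Set B.carrier, G.Finite ∧ S = subGen B G) →
      FinPresented σ E (B.subAlg S hS)

/-- Lemma 2.2: if `f : F(ȳ) → A` and `g : F(x̄) → A` are surjective
homomorphisms, `r, s` are homomorphisms with `f = g ∘ r` and `g = f ∘ s`, and
`ker g` is generated by `Pr`, then `ker f` is generated by
`Σ = {(s a, s b) | (a,b) ∈ Pr} ∪ {(y, s (r y)) | y ∈ ȳ}`. -/
theorem stmt1 (σ : Signature) (hconst : ∃ o : σ.Op, σ.arity o = 0)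
    (E : EqTheory σ) (X Y : Type) (A : Alg σ) (hA : A.Models E)
    (f : Hom (FreeAlg σ E Y) A) (g : Hom (FreeAlg σ E X) A)
    (r : Hom (FreeAlg σ E Y) (FreeAlg σ E X)) (s : Hom (FreeAlg σ E X) (FreeAlg σ E Y))
    (hf : Function.Surjective f.toFun) (hg : Function.Surjective g.toFun)
    (hfr : ∀ u, f.toFun u = g.toFun (r.toFun u))
    (hgs : ∀ u, g.toFun u = f.toFun (s.toFun u))
    (Pr : Set ((FreeAlg σ E X).carrier × (FreeAlg σ E X).carrier))
    (hker : kerHom g = cgGen (FreeAlg σ E X) Pr) :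
    kerHom f = cgGen (FreeAlg σ E Y)
      ({p | ∃ q ∈ Pr, p = (s.toFun q.1, s.toFun q.2)} ∪
       {p | ∃ y : Y, p = (FreeAlg.gen σ E Y y, s.toFun (r.toFun (FreeAlg.gen σ E Y y)))}) := by
  classical
  set Sgen : Set ((FreeAlg σ E Y).carrier × (FreeAlg σ E Y).carrier) :=
    ({p | ∃ q ∈ Pr, p = (s.toFun q.1, s.toFun q.2)} ∪
     {p | ∃ y : Y, p = (FreeAlg.gen σ E Y y, s.toFun (r.toFun (FreeAlg.gen σ E Y y)))})
    with hSgen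
  have hcong : IsCong (FreeAlg σ E Y) (cgGen (FreeAlg σ E Y) Sgen) := by
    constructor
    · constructor
      · intro a R hR _; exact hR.1.refl a
      · intro a b h R hR hS; exact hR.1.symm (h R hR hS)
      · intro a b c h1 h2 R hR hS; exact hR.1.trans (h1 R hR hS) (h2 R hR hS)
    · intro o as bs h R hR hS
      exact hR.2 o as bs fun i => h i R hR hS
  have mk_op : ∀ (o : σ.Op) (ts : Fin (σ.arity o) → Term σ Y),
      Quotient.mk (freeSetoid σ E Y) (Term.op o ts) =
      (FreeAlg σ E Y).interp o (fun i => Quotient.mk (freeSetoid σ E Y) (ts i)) := by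
    intro o ts
    apply Quotient.sound
    intro A hA v
    show A.interp o _ = A.interp o _
    refine congrArg _ (funext fun i => ?_)
    exact (Quotient.exact (Quotient.out_eq (Quotient.mk (freeSetoid σ E Y) (ts i))) A hA v).symm
  have key : ∀ u : (FreeAlg σ E Y).carrier,
      cgGen (FreeAlg σ E Y) Sgen u (s.toFun (r.toFun u)) := by
    refine Quotient.ind ?_
    intro t
    induction t with
    | var y => exact fun R hR hS => hS _ (Or.inr ⟨y, rfl⟩)
    | op o ts ih =>
      rw [mk_op]; erw [r.map_op, s.map_op]
      intro R hR hS
      exact hR.2 o _ _ fun i => ih i R hR hS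
  funext u v
  apply propext
  constructor
  · intro h
    have hr : cgGen (FreeAlg σ E X) Pr (r.toFun u) (r.toFun v) := by
      rw [← hker]
      show g.toFun (r.toFun u) = g.toFun (r.toFun v)
      rw [← hfr, ← hfr]; exact h
    have hRcong : IsCong (FreeAlg σ E X)
        (fun a b => cgGen (FreeAlg σ E Y) Sgen (s.toFun a) (s.toFun b)) := by
      constructor
      · constructor
        · intro a; exact hcong.1.refl _
        · intro a b hab; exact hcong.1.symm hab
        · intro a b c h1 h2; exact hcong.1.trans h1 h2
      · intro o as bs hab
        rw [s.map_op, s.map_op]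
        exact hcong.2 o _ _ hab
    have hmid := hr _ hRcong (fun p hp => fun R hR hS => hS _ (Or.inl ⟨p, hp, rfl⟩))
    exact hcong.1.trans (key u) (hcong.1.trans hmid (hcong.1.symm (key v)))
  · intro h
    have hkf : IsCong (FreeAlg σ E Y) (kerHom f) := by
      constructor
      · exact ⟨fun a => rfl, fun h => h.symm, fun h1 h2 => h1.trans h2⟩
      · intro o as bs hab
        show f.toFun _ = f.toFun _
        rw [f.map_op, f.map_op]
        exact congrArg _ (funext hab)
    refine h (kerHom f) hkf ?_
    rintro p (⟨q, hq, rfl⟩ | ⟨y, rfl⟩)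
    · show f.toFun (s.toFun q.1) = f.toFun (s.toFun q.2)
      rw [← hgs, ← hgs]
      have : cgGen (FreeAlg σ E X) Pr q.1 q.2 := fun R hR hS => hS q hq
      rw [← hker] at this
      exact this
    · show f.toFun _ = f.toFun (s.toFun (r.toFun _))
      rw [← hgs, ← hfr]
end

section
/- A variety V (in a signature with a constant) is coherent if and only if for all finite disjoint sets of variables x̄, ȳ and every compact congruence Θ on the free algebra F(x̄, ȳ), the restricted congruence Θ ∩ F(ȳ)² on F(ȳ) is compact. -/
section Aux

variable {σ : Signature} {E : EqTheory σ}

/-! ### Basic term lemmas -/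

theorem mk_out_rel {X : Type} (t : Term σ X) :
    TermRel σ E X (Quotient.mk (freeSetoid σ E X) t).out t :=
  Quotient.exact (Quotient.out_eq (Quotient.mk (freeSetoid σ E X) t))

theorem fmk_op {X : Type} (o : σ.Op) (ts : Fin (σ.arity o) → Term σ X) :
    Quotient.mk (freeSetoid σ E X) (Term.op o ts)
      = (FreeAlg σ E X).interp o (fun i => Quotient.mk (freeSetoid σ E X) (ts i)) := by
  apply Quotient.sound
  intro A hA v
  show A.interp o _ = A.interp o _
  refine congrArg _ (funext fun i => ?_)
  exact ((mk_out_rel (E := E) (ts i)) A hA v).symm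

def tsubst {X Y : Type} (s : Y → Term σ X) : Term σ Y → Term σ X
  | .var y => s y
  | .op o ts => .op o fun i => tsubst s (ts i)

theorem eval_tsubst {X Y : Type} (A : Alg σ) (s : Y → Term σ X) (v : X → A.carrier) :
    ∀ t : Term σ Y, (tsubst s t).eval A v = t.eval A (fun y => (s y).eval A v)
  | .var _ => rfl
  | .op o ts => congrArg _ (funext fun i => eval_tsubst A s v (ts i))

theorem hom_eval {A B : Alg σ} (f : Hom A B) {X : Type} (v : X → A.carrier) :
    ∀ t : Term σ X, f.toFun (t.eval A v) = t.eval B (fun x => f.toFun (v x))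
  | .var _ => rfl
  | .op o ts => by
    show f.toFun (A.interp o _) = B.interp o _
    rw [f.map_op]
    exact congrArg _ (funext fun i => hom_eval f v (ts i))

theorem free_models (X : Type) : (FreeAlg σ E X).Models E := by
  intro p hp v
  have h1 : ∀ t : Term σ ℕ, t.eval (FreeAlg σ E X) v
      = Quotient.mk (freeSetoid σ E X) (tsubst (fun k => (v k).out) t) := by
    intro t
    induction t with
    | var k => exact (Quotient.out_eq (v k)).symm
    | op o ts ih =>
      show (FreeAlg σ E X).interp o _
          = Quotient.mk (freeSetoid σ E X) (Term.op o fun i => tsubst (fun k => (v k).out) (ts i))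
      rw [fmk_op]
      exact congrArg _ (funext fun i => ih i)
  rw [h1, h1]
  apply Quotient.sound
  intro A hA w
  rw [eval_tsubst, eval_tsubst]
  exact hA p hp _

/-! ### Homs -/

noncomputable def evalHom {X : Type} (A : Alg σ) (hA : A.Models E) (v : X → A.carrier) :
    Hom (FreeAlg σ E X) A where
  toFun := Quotient.lift (fun t : Term σ X => t.eval A v) (fun s t h => h A hA v)
  map_op o as := by
    show (Term.op o fun i => (as i).out).eval A v = _
    show A.interp o _ = A.interp o _
    refine congrArg _ (funext fun i => ?_)
    conv_rhs => rw [← Quotient.out_eq (as i)]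
    rfl

def Hom.comp {A B C : Alg σ} (g : Hom B C) (f : Hom A B) : Hom A C where
  toFun := fun a => g.toFun (f.toFun a)
  map_op o as := by
    show g.toFun (f.toFun (A.interp o as)) = C.interp o fun i => g.toFun (f.toFun (as i))
    rw [f.map_op, g.map_op]

theorem free_hom_ext {X : Type} {A : Alg σ} (f g : Hom (FreeAlg σ E X) A)
    (h : ∀ x, f.toFun (FreeAlg.gen σ E X x) = g.toFun (FreeAlg.gen σ E X x)) :
    ∀ a, f.toFun a = g.toFun a := by
  refine Quotient.ind ?_
  intro t
  induction t with
  | var x => exact h x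
  | op o ts ih =>
    rw [fmk_op, f.map_op o (fun i => Quotient.mk (freeSetoid σ E X) (ts i)),
      g.map_op o (fun i => Quotient.mk (freeSetoid σ E X) (ts i))]
    exact congrArg _ (funext ih)

theorem models_of_surj {A B : Alg σ} (hA : A.Models E) (f : Hom A B)
    (hf : Function.Surjective f.toFun) : B.Models E := by
  intro p hp v
  choose w hw using fun k => hf (v k)
  have hv : v = fun k => f.toFun (w k) := funext fun k => (hw k).symm
  rw [hv, ← hom_eval, ← hom_eval, hA p hp]

theorem kerHom_isCong {A B : Alg σ} (f : Hom A B) : IsCong A (kerHom f) := by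
  refine ⟨⟨fun _ => rfl, Eq.symm, Eq.trans⟩, fun o as bs h => ?_⟩
  show f.toFun _ = f.toFun _
  rw [f.map_op, f.map_op]
  exact congrArg _ (funext h)

/-! ### Rename -/

theorem term_rename_rename {X Y Z : Type} (g : Y → Z) (h : X → Y) :
    ∀ t : Term σ X, (t.rename h).rename g = t.rename (fun x => g (h x))
  | .var _ => rfl
  | .op o ts => congrArg _ (funext fun i => term_rename_rename g h (ts i))

theorem term_rename_id {X : Type} : ∀ t : Term σ X, t.rename (fun x => x) = t
  | .var _ => rfl
  | .op o ts => congrArg _ (funext fun i => term_rename_id (ts i))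

theorem rename_rename {X Y Z : Type} (g : Y → Z) (h : X → Y)
    (a : (FreeAlg σ E X).carrier) :
    FreeAlg.rename (E := E) g (FreeAlg.rename (E := E) h a)
      = FreeAlg.rename (E := E) (fun x => g (h x)) a := by
  induction a using Quotient.ind with
  | _ t =>
    show Quotient.mk (freeSetoid σ E Z) ((t.rename h).rename g)
        = Quotient.mk (freeSetoid σ E Z) (t.rename (fun x => g (h x)))
    rw [term_rename_rename]

theorem rename_id {X : Type} (a : (FreeAlg σ E X).carrier) :
    FreeAlg.rename (E := E) (fun x => x) a = a := by
  induction a using Quotient.ind with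
  | _ t =>
    show Quotient.mk (freeSetoid σ E X) (t.rename (fun x => x))
        = Quotient.mk (freeSetoid σ E X) t
    rw [term_rename_id]

def renameHom {X Y : Type} (h : X → Y) : Hom (FreeAlg σ E X) (FreeAlg σ E Y) where
  toFun := FreeAlg.rename (E := E) h
  map_op o as := by
    have key : ∀ i, FreeAlg.rename (E := E) h (as i)
        = Quotient.mk (freeSetoid σ E Y) ((as i).out.rename h) := by
      intro i
      conv_lhs => rw [← Quotient.out_eq (as i)]
      rfl
    show Quotient.mk (freeSetoid σ E Y) (Term.op o fun i => (as i).out.rename h) = _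
    rw [fmk_op]
    exact congrArg _ (funext fun i => (key i).symm)

theorem rename_interp {X Y : Type} (h : X → Y) (o : σ.Op)
    (as : Fin (σ.arity o) → (FreeAlg σ E X).carrier) :
    FreeAlg.rename (E := E) h ((FreeAlg σ E X).interp o as)
      = (FreeAlg σ E Y).interp o (fun i => FreeAlg.rename (E := E) h (as i)) :=
  (renameHom (E := E) h).map_op o as

end Aux
section Aux2

variable {σ : Signature} {E : EqTheory σ}

/-! ### Congruence generation -/

theorem cgGen_isCong (A : Alg σ) (S : Set (A.carrier × A.carrier)) :
    IsCong A (cgGen A S) := by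
  refine ⟨⟨?_, ?_, ?_⟩, ?_⟩
  · intro a r hr _; exact hr.1.refl a
  · intro a b h r hr hS; exact hr.1.symm (h r hr hS)
  · intro a b c h1 h2 r hr hS; exact hr.1.trans (h1 r hr hS) (h2 r hr hS)
  · intro o as bs h r hr hS; exact hr.2 o as bs (fun i => h i r hr hS)

theorem cgGen_of_mem {A : Alg σ} {S : Set (A.carrier × A.carrier)} {p} (hp : p ∈ S) :
    cgGen A S p.1 p.2 := fun _ _ hS => hS p hp

theorem cgGen_le {A : Alg σ} {S : Set (A.carrier × A.carrier)}
    {r : A.carrier → A.carrier → Prop} (hr : IsCong A r) (hS : ∀ p ∈ S, r p.1 p.2) :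
    ∀ a b, cgGen A S a b → r a b := fun _ _ h => h r hr hS

theorem cgGen_mono {A : Alg σ} {S T : Set (A.carrier × A.carrier)} (h : S ⊆ T) :
    ∀ a b, cgGen A S a b → cgGen A T a b :=
  cgGen_le (cgGen_isCong A T) (fun _ hp => cgGen_of_mem (h hp))

theorem cgGen_map {A B : Alg σ} (f : Hom A B) (S : Set (A.carrier × A.carrier)) :
    ∀ a b, cgGen A S a b →
      cgGen B ((fun p => (f.toFun p.1, f.toFun p.2)) '' S) (f.toFun a) (f.toFun b) := by
  set T := (fun p : A.carrier × A.carrier => (f.toFun p.1, f.toFun p.2)) '' S with hT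
  refine cgGen_le (r := fun a b => cgGen B T (f.toFun a) (f.toFun b)) ⟨⟨?_, ?_, ?_⟩, ?_⟩ ?_
  · intro a; exact (cgGen_isCong B T).1.refl _
  · intro a b h; exact (cgGen_isCong B T).1.symm h
  · intro a b c h1 h2; exact (cgGen_isCong B T).1.trans h1 h2
  · intro o as bs h
    rw [f.map_op, f.map_op]
    exact (cgGen_isCong B T).2 o _ _ h
  · intro p hp
    exact cgGen_of_mem (p := (f.toFun p.1, f.toFun p.2)) ⟨p, hp, rfl⟩

/-! ### Quotient algebras -/

def congSetoid {A : Alg σ} {Θ : A.carrier → A.carrier → Prop} (h : IsCong A Θ) :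
    Setoid A.carrier := ⟨Θ, h.1⟩

noncomputable def quotAlg (A : Alg σ) (Θ : A.carrier → A.carrier → Prop) (h : IsCong A Θ) : Alg σ where
  carrier := Quotient (congSetoid h)
  interp o as := Quotient.mk (congSetoid h) (A.interp o fun i => (as i).out)

def quotHom (A : Alg σ) (Θ : A.carrier → A.carrier → Prop) (h : IsCong A Θ) :
    Hom A (quotAlg A Θ h) where
  toFun := Quotient.mk (congSetoid h)
  map_op o as := Quotient.sound (h.2 o _ _ fun i =>
    Quotient.exact (Quotient.out_eq (Quotient.mk (congSetoid h) (as i))).symm)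

theorem quotHom_surj (A : Alg σ) (Θ : A.carrier → A.carrier → Prop) (h : IsCong A Θ) :
    Function.Surjective (quotHom A Θ h).toFun :=
  fun b => ⟨b.out, Quotient.out_eq b⟩

theorem quotHom_ker {A : Alg σ} {Θ : A.carrier → A.carrier → Prop} (h : IsCong A Θ)
    {a b : A.carrier} : (quotHom A Θ h).toFun a = (quotHom A Θ h).toFun b ↔ Θ a b :=
  ⟨fun e => Quotient.exact e, fun e => Quotient.sound e⟩

/-! ### Subalgebras -/

theorem subGen_isSub (A : Alg σ) (G : Set A.carrier) : IsSubalg A (subGen A G) :=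
  fun o as h T hT hG => hT o as fun i => h i T hT hG

theorem subset_subGen (A : Alg σ) (G : Set A.carrier) : G ⊆ subGen A G :=
  fun _ ha _ _ hG => hG ha

theorem free_subGen {X : Type} (a : (FreeAlg σ E X).carrier) :
    a ∈ subGen (FreeAlg σ E X) (Set.range (FreeAlg.gen σ E X)) := by
  induction a using Quotient.ind with
  | _ t =>
    induction t with
    | var x => exact subset_subGen _ _ ⟨x, rfl⟩
    | op o ts ih =>
      intro T hT hG
      rw [fmk_op (E := E)]
      exact hT o _ fun i => ih i T hT hG

def corestrict {A B : Alg σ} (f : Hom A B) (S : Set B.carrier) (hS : IsSubalg B S)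
    (h : ∀ a, f.toFun a ∈ S) : Hom A (B.subAlg S hS) where
  toFun a := ⟨f.toFun a, h a⟩
  map_op o as := Subtype.ext (f.map_op o as)

theorem image_isSub {X : Type} {B : Alg σ} (f : Hom (FreeAlg σ E X) B) :
    IsSubalg B (Set.range f.toFun) := by
  intro o as hi
  choose w hw using hi
  have : as = fun i => f.toFun (w i) := funext fun i => (hw i).symm
  rw [this, ← f.map_op]
  exact ⟨_, rfl⟩

/-- The range of a hom from a free algebra is the subuniverse generated by the images
of the generators. -/
theorem range_eq_subGen {X : Type} {B : Alg σ} (f : Hom (FreeAlg σ E X) B) :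
    ∀ b ∈ subGen B (Set.range fun x => f.toFun (FreeAlg.gen σ E X x)),
      ∃ a, f.toFun a = b := by
  intro b hb
  exact hb (Set.range f.toFun) (image_isSub f)
    (fun c ⟨x, hx⟩ => ⟨FreeAlg.gen σ E X x, hx⟩)

theorem mem_of_gen_mem {X : Type} {B : Alg σ} (f : Hom (FreeAlg σ E X) B)
    (S : Set B.carrier) (hS : IsSubalg B S)
    (hg : ∀ x, f.toFun (FreeAlg.gen σ E X x) ∈ S) : ∀ a, f.toFun a ∈ S := by
  intro a
  refine free_subGen a {c | f.toFun c ∈ S} ?_ ?_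
  · intro o as hi
    show f.toFun _ ∈ S
    rw [f.map_op]
    exact hS o _ hi
  · rintro c ⟨x, rfl⟩
    exact hg x

end Aux2
section Aux3

variable {σ : Signature} {E : EqTheory σ}

/-- Any element is congruent (mod the generated congruence containing `(gen i, u (gen i))`)
to its image under the endo-hom `u`. -/
theorem cgGen_self_hom {X : Type} {u : Hom (FreeAlg σ E X) (FreeAlg σ E X)}
    {U : Set ((FreeAlg σ E X).carrier × (FreeAlg σ E X).carrier)}
    (hU : ∀ x, (FreeAlg.gen σ E X x, u.toFun (FreeAlg.gen σ E X x)) ∈ U) :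
    ∀ a, cgGen (FreeAlg σ E X) U a (u.toFun a) := by
  refine Quotient.ind ?_
  intro t
  induction t with
  | var x => exact cgGen_of_mem (hU x)
  | op o ts ih =>
    rw [fmk_op (E := E), u.map_op o (fun i => Quotient.mk (freeSetoid σ E X) (ts i))]
    exact (cgGen_isCong _ U).2 o _ _ ih

/-- If an algebra has two presentations as a quotient of f.g. free algebras and the
kernel of one is compact, so is the kernel of the other. -/
theorem compact_ker_of_two {A : Alg σ} {n k : ℕ}
    (f : Hom (FreeAlg σ E (Fin n)) A) (hf : Function.Surjective f.toFun)
    (g : Hom (FreeAlg σ E (Fin k)) A) (hg : Function.Surjective g.toFun)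
    (hker : CompactRel (FreeAlg σ E (Fin k)) (kerHom g)) :
    CompactRel (FreeAlg σ E (Fin n)) (kerHom f) := by
  obtain ⟨T, hTfin, hTgen⟩ := hker
  -- a hom p : F(n) → F(k) with g ∘ p = f
  choose pv hpv using fun i : Fin n => hg (f.toFun (FreeAlg.gen σ E (Fin n) i))
  let p : Hom (FreeAlg σ E (Fin n)) (FreeAlg σ E (Fin k)) :=
    evalHom _ (free_models _) pv
  have hgp : ∀ a, g.toFun (p.toFun a) = f.toFun a :=
    free_hom_ext (g.comp p) f (fun i => hpv i)
  -- a hom q : F(k) → F(n) with f ∘ q = g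
  choose qv hqv using fun j : Fin k => hf (g.toFun (FreeAlg.gen σ E (Fin k) j))
  let q : Hom (FreeAlg σ E (Fin k)) (FreeAlg σ E (Fin n)) :=
    evalHom _ (free_models _) qv
  have hfq : ∀ a, f.toFun (q.toFun a) = g.toFun a :=
    free_hom_ext (f.comp q) g (fun j => hqv j)
  -- the finite generating set
  set U : Set ((FreeAlg σ E (Fin n)).carrier × (FreeAlg σ E (Fin n)).carrier) :=
    ((fun pr : _ × _ => (q.toFun pr.1, q.toFun pr.2)) '' T) ∪
      (Set.range fun i : Fin n =>
        (FreeAlg.gen σ E (Fin n) i, q.toFun (p.toFun (FreeAlg.gen σ E (Fin n) i)))) with hU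
  refine ⟨U, (hTfin.image _).union (Set.finite_range _), ?_⟩
  funext a b
  apply propext
  constructor
  · -- kerHom f ⊆ cgGen U
    intro hab
    have hstep : ∀ c, cgGen (FreeAlg σ E (Fin n)) U c ((q.comp p).toFun c) :=
      cgGen_self_hom (fun i => Set.mem_union_right _ ⟨i, rfl⟩)
    have hpab : kerHom g (p.toFun a) (p.toFun b) := by
      show g.toFun _ = g.toFun _
      rw [hgp, hgp]; exact hab
    rw [hTgen] at hpab
    have hq : cgGen (FreeAlg σ E (Fin n)) U (q.toFun (p.toFun a)) (q.toFun (p.toFun b)) :=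
      cgGen_mono Set.subset_union_left _ _ (cgGen_map q T _ _ hpab)
    exact (cgGen_isCong _ U).1.trans (hstep a)
      ((cgGen_isCong _ U).1.trans hq ((cgGen_isCong _ U).1.symm (hstep b)))
  · -- cgGen U ⊆ kerHom f
    intro hab
    refine cgGen_le (kerHom_isCong f) ?_ a b hab
    rintro pr (⟨⟨u, v⟩, huv, rfl⟩ | ⟨i, rfl⟩)
    · show f.toFun (q.toFun u) = f.toFun (q.toFun v)
      rw [hfq, hfq]
      have : kerHom g u v := by rw [hTgen]; exact cgGen_of_mem huv
      exact this
    · show f.toFun _ = f.toFun (q.toFun (p.toFun _))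
      rw [hfq, hgp]

end Aux3
section Aux4

variable {σ : Signature} {E : EqTheory σ}

theorem stmt2_forward (hcoh : Coherent σ E) (m n : ℕ)
    (Θ : (FreeAlg σ E (Fin m ⊕ Fin n)).carrier →
         (FreeAlg σ E (Fin m ⊕ Fin n)).carrier → Prop)
    (hΘ : IsCong (FreeAlg σ E (Fin m ⊕ Fin n)) Θ)
    (hΘc : CompactRel (FreeAlg σ E (Fin m ⊕ Fin n)) Θ) :
    CompactRel (FreeAlg σ E (Fin n))
      (fun a b => Θ (FreeAlg.rename (E := E) Sum.inr a)
                    (FreeAlg.rename (E := E) Sum.inr b)) := by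
  obtain ⟨S, hSfin, hSgen⟩ := hΘc
  let FMN := FreeAlg σ E (Fin m ⊕ Fin n)
  let B := quotAlg FMN Θ hΘ
  let π := quotHom FMN Θ hΘ
  have hπs := quotHom_surj FMN Θ hΘ
  have hBmod : B.Models E := models_of_surj (free_models _) π hπs
  -- B is finitely presented via F(m+n)
  let e := finSumFinEquiv (m := m) (n := n)
  let r : Hom (FreeAlg σ E (Fin (m + n))) FMN := renameHom (E := E) e.symm
  let r' : Hom FMN (FreeAlg σ E (Fin (m + n))) := renameHom (E := E) e
  have hrr' : ∀ a, r.toFun (r'.toFun a) = a := by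
    intro a
    show FreeAlg.rename (E := E) _ (FreeAlg.rename (E := E) _ a) = a
    rw [rename_rename]
    have he : (fun x : Fin m ⊕ Fin n => e.symm (e x)) = fun x => x :=
      funext fun x => e.symm_apply_apply x
    rw [he, rename_id]
  have hr'r : ∀ a, r'.toFun (r.toFun a) = a := by
    intro a
    show FreeAlg.rename (E := E) _ (FreeAlg.rename (E := E) _ a) = a
    rw [rename_rename]
    have he : (fun x : Fin (m + n) => e (e.symm x)) = fun x => x :=
      funext fun x => e.apply_symm_apply x
    rw [he, rename_id]
  let F0 := π.comp r
  have hF0surj : Function.Surjective F0.toFun := by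
    intro b
    obtain ⟨a, ha⟩ := hπs b
    refine ⟨r'.toFun a, ?_⟩
    show π.toFun (r.toFun (r'.toFun a)) = b
    rw [hrr', ha]
  have hF0ker : CompactRel _ (kerHom F0) := by
    refine ⟨(fun pr : _ × _ => (r'.toFun pr.1, r'.toFun pr.2)) '' S, hSfin.image _, ?_⟩
    funext a b; apply propext
    constructor
    · intro hab
      have h1 : Θ (r.toFun a) (r.toFun b) := (quotHom_ker hΘ).1 hab
      rw [hSgen] at h1
      have h2 := cgGen_map r' S _ _ h1
      rw [hr'r, hr'r] at h2
      exact h2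
    · intro hab
      refine cgGen_le (kerHom_isCong F0) ?_ a b hab
      rintro pr ⟨⟨u, v⟩, huv, rfl⟩
      show π.toFun (r.toFun (r'.toFun u)) = π.toFun (r.toFun (r'.toFun v))
      rw [hrr', hrr']
      exact (quotHom_ker hΘ).2 (by rw [hSgen]; exact cgGen_of_mem huv)
  -- the finitely generated subalgebra
  let G := Set.range fun j : Fin n => π.toFun (FreeAlg.gen σ E (Fin m ⊕ Fin n) (Sum.inr j))
  have hfp : FinPresented σ E (B.subAlg (subGen B G) (subGen_isSub B G)) :=
    hcoh B hBmod ⟨m + n, F0, hF0surj, hF0ker⟩ _ (subGen_isSub B G)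
      ⟨G, Set.finite_range _, rfl⟩
  obtain ⟨k, g, hgsurj, hgker⟩ := hfp
  let h0 := π.comp (renameHom (E := E) Sum.inr)
  have hmem : ∀ a, h0.toFun a ∈ subGen B G :=
    mem_of_gen_mem h0 _ (subGen_isSub B G) (fun j => subset_subGen B G ⟨j, rfl⟩)
  let h := corestrict h0 _ (subGen_isSub B G) hmem
  have hsurj : Function.Surjective h.toFun := by
    rintro ⟨b, hb⟩
    obtain ⟨a, ha⟩ := range_eq_subGen h0 b hb
    exact ⟨a, Subtype.ext ha⟩
  have hker := compact_ker_of_two h hsurj g hgsurj hgker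
  have hkeq : (fun a b => Θ (FreeAlg.rename (E := E) Sum.inr a)
      (FreeAlg.rename (E := E) Sum.inr b)) = kerHom h := by
    funext a b; apply propext
    constructor
    · intro hab
      exact Subtype.ext ((quotHom_ker hΘ).2 hab)
    · intro hab
      exact (quotHom_ker hΘ).1 (congrArg Subtype.val hab)
  rw [hkeq]
  exact hker

theorem stmt2_backward
    (H : ∀ (m n : ℕ)
      (Θ : (FreeAlg σ E (Fin m ⊕ Fin n)).carrier →
           (FreeAlg σ E (Fin m ⊕ Fin n)).carrier → Prop),
      IsCong (FreeAlg σ E (Fin m ⊕ Fin n)) Θ →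
      CompactRel (FreeAlg σ E (Fin m ⊕ Fin n)) Θ →
      CompactRel (FreeAlg σ E (Fin n))
        (fun a b => Θ (FreeAlg.rename (E := E) Sum.inr a)
                      (FreeAlg.rename (E := E) Sum.inr b))) :
    Coherent σ E := by
  intro B hB hBfp S hSsub hSfg
  obtain ⟨G, hGfin, hSG⟩ := hSfg
  obtain ⟨m, f, hfsurj, hfker⟩ := hBfp
  obtain ⟨S₀, hS₀fin, hfker⟩ := hfker
  obtain ⟨n, emb, hemb⟩ := hGfin.fin_embedding
  choose t ht using fun j : Fin n => hfsurj (emb j)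
  let ι : Hom (FreeAlg σ E (Fin m)) (FreeAlg σ E (Fin m ⊕ Fin n)) :=
    renameHom (E := E) Sum.inl
  set U : Set ((FreeAlg σ E (Fin m ⊕ Fin n)).carrier ×
      (FreeAlg σ E (Fin m ⊕ Fin n)).carrier) :=
    ((fun pr : _ × _ => (ι.toFun pr.1, ι.toFun pr.2)) '' S₀) ∪
      (Set.range fun j : Fin n =>
        (FreeAlg.gen σ E (Fin m ⊕ Fin n) (Sum.inr j), ι.toFun (t j))) with hUdef
  have hΘcong := cgGen_isCong (FreeAlg σ E (Fin m ⊕ Fin n)) U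
  have hΘcompact : CompactRel _ (cgGen (FreeAlg σ E (Fin m ⊕ Fin n)) U) :=
    ⟨U, (hS₀fin.image _).union (Set.finite_range _), rfl⟩
  have hΦ := H m n _ hΘcong hΘcompact
  have hGS : G ⊆ S := by rw [hSG]; exact subset_subGen B G
  let h0 : Hom (FreeAlg σ E (Fin n)) B := evalHom B hB (fun j => emb j)
  have hmem : ∀ a, h0.toFun a ∈ S :=
    mem_of_gen_mem h0 S hSsub (fun j => hGS (hemb ▸ ⟨j, rfl⟩))
  let h := corestrict h0 S hSsub hmem
  have hsurj : Function.Surjective h.toFun := by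
    rintro ⟨b, hb⟩
    rw [hSG] at hb
    have hb' : b ∈ subGen B (Set.range fun x => h0.toFun (FreeAlg.gen σ E (Fin n) x)) := by
      have : (Set.range fun x => h0.toFun (FreeAlg.gen σ E (Fin n) x)) = G := by
        rw [← hemb]
        rfl
      rw [this]
      exact hb
    obtain ⟨a, ha⟩ := range_eq_subGen h0 b hb'
    exact ⟨a, Subtype.ext ha⟩
  -- the big hom on F(m ⊕ n)
  let Hh : Hom (FreeAlg σ E (Fin m ⊕ Fin n)) B :=
    evalHom B hB (Sum.elim (fun i => f.toFun (FreeAlg.gen σ E (Fin m) i)) (fun j => emb j))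
  have hHl : ∀ a, Hh.toFun (ι.toFun a) = f.toFun a :=
    free_hom_ext (Hh.comp ι) f (fun i => rfl)
  have hHr : ∀ a, Hh.toFun (FreeAlg.rename (E := E) Sum.inr a) = h0.toFun a :=
    free_hom_ext (Hh.comp (renameHom (E := E) Sum.inr)) h0 (fun j => rfl)
  have hΘker : ∀ a b, cgGen (FreeAlg σ E (Fin m ⊕ Fin n)) U a b →
      Hh.toFun a = Hh.toFun b := by
    refine cgGen_le (kerHom_isCong Hh) ?_
    rintro pr (⟨⟨u, v⟩, huv, rfl⟩ | ⟨j, rfl⟩)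
    · show Hh.toFun (ι.toFun u) = Hh.toFun (ι.toFun v)
      rw [hHl, hHl]
      have huv' : kerHom f u v := by rw [hfker]; exact cgGen_of_mem huv
      exact huv'
    · show Hh.toFun _ = Hh.toFun (ι.toFun (t j))
      rw [hHl, ht j]
      rfl
  have hrep : ∀ a, ∃ a', cgGen (FreeAlg σ E (Fin m ⊕ Fin n)) U a (ι.toFun a') := by
    intro a
    induction a using Quotient.ind with
    | _ tm =>
      induction tm with
      | var x =>
        cases x with
        | inl i => exact ⟨FreeAlg.gen σ E (Fin m) i, hΘcong.1.refl _⟩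
        | inr j =>
          exact ⟨t j, cgGen_of_mem
            (p := (FreeAlg.gen σ E (Fin m ⊕ Fin n) (Sum.inr j), ι.toFun (t j)))
            (Set.mem_union_right _ ⟨j, rfl⟩)⟩
      | op o ts ih =>
        choose a' ha' using ih
        refine ⟨(FreeAlg σ E (Fin m)).interp o a', ?_⟩
        rw [fmk_op (E := E), ι.map_op]
        exact hΘcong.2 o _ _ ha'
  have hker2 : ∀ a b : (FreeAlg σ E (Fin n)).carrier,
      h0.toFun a = h0.toFun b →
      cgGen (FreeAlg σ E (Fin m ⊕ Fin n)) U (FreeAlg.rename (E := E) Sum.inr a)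
        (FreeAlg.rename (E := E) Sum.inr b) := by
    intro a b hab
    obtain ⟨a', ha'⟩ := hrep (FreeAlg.rename (E := E) Sum.inr a)
    obtain ⟨b', hb'⟩ := hrep (FreeAlg.rename (E := E) Sum.inr b)
    have h1 : f.toFun a' = f.toFun b' := by
      rw [← hHl, ← hHl, ← hΘker _ _ ha', ← hΘker _ _ hb', hHr, hHr, hab]
    have h2 : cgGen (FreeAlg σ E (Fin m)) S₀ a' b' := by
      rw [← hfker]; exact h1
    have h3 := cgGen_map ι S₀ _ _ h2
    have h4 := cgGen_mono (Set.subset_union_left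
      (t := Set.range fun j : Fin n =>
        (FreeAlg.gen σ E (Fin m ⊕ Fin n) (Sum.inr j), ι.toFun (t j)))) _ _ h3
    exact hΘcong.1.trans ha' (hΘcong.1.trans h4 (hΘcong.1.symm hb'))
  refine ⟨n, h, hsurj, ?_⟩
  have hkeq : kerHom h = fun a b =>
      cgGen (FreeAlg σ E (Fin m ⊕ Fin n)) U (FreeAlg.rename (E := E) Sum.inr a)
        (FreeAlg.rename (E := E) Sum.inr b) := by
    funext a b; apply propext
    constructor
    · intro hab
      exact hker2 a b (congrArg Subtype.val hab)
    · intro hab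
      apply Subtype.ext
      show h0.toFun a = h0.toFun b
      rw [← hHr, ← hHr]
      exact hΘker _ _ hab
  rw [hkeq]
  exact hΦ

end Aux4

/-- Theorem 2.3: a variety (in a signature with a constant) is coherent
iff for all finite disjoint sets of variables `x̄ = Fin m`, `ȳ = Fin n` and every
compact congruence `Θ` on `F(x̄, ȳ)`, the restriction of `Θ` to `F(ȳ)` (pulled back
along the canonical inclusion) is compact. -/
theorem stmt2 (σ : Signature) (hconst : ∃ o : σ.Op, σ.arity o = 0) (E : EqTheory σ) :
    Coherent σ E ↔
      ∀ (m n : ℕ)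
        (Θ : (FreeAlg σ E (Fin m ⊕ Fin n)).carrier →
             (FreeAlg σ E (Fin m ⊕ Fin n)).carrier → Prop),
        IsCong (FreeAlg σ E (Fin m ⊕ Fin n)) Θ →
        CompactRel (FreeAlg σ E (Fin m ⊕ Fin n)) Θ →
        CompactRel (FreeAlg σ E (Fin n))
          (fun a b => Θ (FreeAlg.rename (E := E) Sum.inr a)
                        (FreeAlg.rename (E := E) Sum.inr b)) := by
  exact ⟨fun hcoh => stmt2_forward hcoh, fun H => stmt2_backward H⟩
end

section
/- Let V be a variety of algebras with a term-definable meet-semilattice reduct and let t(x) be a unary term with V ⊨ t(x) ≤ x and t order-preserving in V. Suppose V satisfies the fixpoint embedding condition: every finitely generated A ∈ V embeds into some B ∈ V in which, for each a ∈ A, the meet ⨅_{k∈ℕ} t^k(a) exists and is a fixpoint of t. If V is coherent, then there exists n ∈ ℕ such that V ⊨ t^{n+1}(x) ≈ t^n(x). -/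
/-- The binary operation defined by a binary term. -/
def meet2 {σ : Signature} (A : Alg σ) (mt : Term σ (Fin 2)) (a b : A.carrier) :
    A.carrier :=
  mt.eval A ![a, b]

/-- The unary operation defined by a unary term. -/
def app1 {σ : Signature} (A : Alg σ) (t : Term σ (Fin 1)) (a : A.carrier) :
    A.carrier :=
  t.eval A ![a]

/-- The term `mt` defines a meet-semilattice structure on every member of the variety. -/
def SemilatticeTerm (σ : Signature) (E : EqTheory σ) (mt : Term σ (Fin 2)) : Prop :=
  ∀ A : Alg σ, A.Models E →
    (∀ a b c : A.carrier, meet2 A mt (meet2 A mt a b) c = meet2 A mt a (meet2 A mt b c)) ∧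
    (∀ a b : A.carrier, meet2 A mt a b = meet2 A mt b a) ∧
    (∀ a : A.carrier, meet2 A mt a a = a)

namespace S4

variable {σ : Signature}

/-- Substitution of terms for variables. -/
def tsubst {X Y : Type} (v : X → Term σ Y) : Term σ X → Term σ Y
  | .var x => v x
  | .op o ts => .op o fun i => tsubst v (ts i)

theorem eval_tsubst {X Y : Type} (A : Alg σ) (v : X → Term σ Y) (w : Y → A.carrier) :
    ∀ s : Term σ X, (tsubst v s).eval A w = s.eval A (fun x => (v x).eval A w)
  | .var _ => rfl
  | .op o ts => by
      show A.interp o _ = A.interp o _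
      exact congrArg _ (funext fun i => eval_tsubst A v w (ts i))

theorem tsubst_var {X : Type} : ∀ s : Term σ X, tsubst (fun x => Term.var x) s = s
  | .var _ => rfl
  | .op o ts => congrArg _ (funext fun i => tsubst_var (ts i))

theorem hom_eval {A B : Alg σ} (f : Hom A B) {X : Type} (v : X → A.carrier) :
    ∀ s : Term σ X, f.toFun (s.eval A v) = s.eval B (fun x => f.toFun (v x))
  | .var _ => rfl
  | .op o ts => by
      show f.toFun (A.interp o _) = B.interp o _
      rw [f.map_op]
      exact congrArg _ (funext fun i => hom_eval f v (ts i))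

def homComp {A B C : Alg σ} (g : Hom B C) (f : Hom A B) : Hom A C where
  toFun := fun a => g.toFun (f.toFun a)
  map_op o as := by
    show g.toFun (f.toFun (A.interp o as)) = _
    rw [f.map_op, g.map_op]

variable {E : EqTheory σ}

def fmk {X : Type} (s : Term σ X) : (FreeAlg σ E X).carrier :=
  Quotient.mk (freeSetoid σ E X) s

theorem out_rel {X : Type} (s : Term σ X) :
    TermRel σ E X (Quotient.out (fmk (E := E) s)) s :=
  Quotient.exact (Quotient.out_eq (fmk s))

theorem mk_op {X : Type} (o : σ.Op) (ts : Fin (σ.arity o) → Term σ X) :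
    (FreeAlg σ E X).interp o (fun i => fmk (ts i)) = fmk (.op o ts) :=
  Quotient.sound fun A hA v =>
    congrArg (A.interp o) (funext fun i => out_rel (E := E) (ts i) A hA v)

theorem eval_mk {X Y : Type} (v : Y → Term σ X) :
    ∀ s : Term σ Y, s.eval (FreeAlg σ E X) (fun y => fmk (v y)) = fmk (tsubst v s)
  | .var _ => rfl
  | .op o ts => by
      show (FreeAlg σ E X).interp o
        (fun i => (ts i).eval (FreeAlg σ E X) (fun y => fmk (v y))) = _
      rw [show (fun i => (ts i).eval (FreeAlg σ E X) (fun y => fmk (v y)))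
            = fun i => fmk (E := E) (tsubst v (ts i)) from funext fun i => eval_mk v (ts i)]
      exact mk_op o _

theorem mk_eval {X : Type} (s : Term σ X) :
    s.eval (FreeAlg σ E X) (fun x => fmk (.var x)) = fmk s := by
  rw [eval_mk, tsubst_var]

theorem freeAlg_models (X : Type) : (FreeAlg σ E X).Models E := by
  intro pr hp v
  have hv : v = fun n => fmk (E := E) (Quotient.out (v n)) :=
    funext fun n => (Quotient.out_eq (v n)).symm
  rw [hv, eval_mk, eval_mk]
  exact Quotient.sound fun A hA w => by
    rw [eval_tsubst, eval_tsubst]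
    exact hA pr hp _

noncomputable def evalHom {X : Type} (A : Alg σ) (hA : A.Models E) (v : X → A.carrier) :
    Hom (FreeAlg σ E X) A where
  toFun := Quotient.lift (fun s : Term σ X => s.eval A v) (fun s u h => h A hA v)
  map_op o as := by
    show Term.eval A v (.op o fun i => (as i).out) = _
    show A.interp o _ = A.interp o _
    refine congrArg _ (funext fun i => ?_)
    conv_rhs => rw [← Quotient.out_eq (as i)]
    rfl

theorem evalHom_mk {X : Type} (A : Alg σ) (hA : A.Models E) (v : X → A.carrier)
    (s : Term σ X) : (evalHom A hA v).toFun (fmk s) = s.eval A v := rfl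

theorem hom_mk {X : Type} {A : Alg σ} (f : Hom (FreeAlg σ E X) A) (s : Term σ X) :
    f.toFun (fmk s) = s.eval A (fun x => f.toFun (fmk (.var x))) := by
  rw [← mk_eval (E := E) s, hom_eval]

theorem hom_ext {X : Type} {A : Alg σ} (f g : Hom (FreeAlg σ E X) A)
    (h : ∀ x, f.toFun (fmk (.var x)) = g.toFun (fmk (.var x))) (a : (FreeAlg σ E X).carrier) :
    f.toFun a = g.toFun a := by
  induction a using Quotient.ind with
  | _ s =>
    rw [show Quotient.mk _ s = fmk (E := E) s from rfl, hom_mk, hom_mk]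
    exact congrArg (s.eval A) (funext h)

theorem isCong_cgGen (A : Alg σ) (S : Set (A.carrier × A.carrier)) : IsCong A (cgGen A S) :=
  ⟨⟨fun a r hr _ => hr.1.refl a,
    fun h r hr hS => hr.1.symm (h r hr hS),
    fun h1 h2 r hr hS => hr.1.trans (h1 r hr hS) (h2 r hr hS)⟩,
   fun o as bs h r hr hS => hr.2 o as bs fun i => h i r hr hS⟩

theorem mem_cgGen {A : Alg σ} {S : Set (A.carrier × A.carrier)} {pr} (h : pr ∈ S) :
    cgGen A S pr.1 pr.2 := fun _ _ hS => hS pr h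

theorem cgGen_le {A : Alg σ} {S : Set (A.carrier × A.carrier)} {r} (hr : IsCong A r)
    (hS : ∀ p ∈ S, r p.1 p.2) {a b} (h : cgGen A S a b) : r a b := h r hr hS

theorem cgGen_mono {A : Alg σ} {S T : Set (A.carrier × A.carrier)} (hST : S ⊆ T) {a b}
    (h : cgGen A S a b) : cgGen A T a b :=
  fun r hr hT => h r hr fun p hp => hT p (hST hp)

theorem isCong_ker {A B : Alg σ} (f : Hom A B) : IsCong A (kerHom f) :=
  ⟨⟨fun _ => rfl, Eq.symm, Eq.trans⟩, fun o as bs h => by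
    show f.toFun _ = f.toFun _
    rw [f.map_op, f.map_op]
    exact congrArg _ (funext h)⟩

theorem isCong_eq (A : Alg σ) : IsCong A (fun a b => a = b) :=
  ⟨⟨fun _ => rfl, Eq.symm, Eq.trans⟩, fun _ _ _ h => congrArg _ (funext h)⟩

theorem cgGen_map {A B : Alg σ} (f : Hom A B) (S : Set (A.carrier × A.carrier))
    {a b} (h : cgGen A S a b) :
    cgGen B ((fun pr => (f.toFun pr.1, f.toFun pr.2)) '' S) (f.toFun a) (f.toFun b) := by
  refine h (fun x y => cgGen B ((fun pr => (f.toFun pr.1, f.toFun pr.2)) '' S)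
      (f.toFun x) (f.toFun y)) ⟨⟨?_, ?_, ?_⟩, ?_⟩ ?_
  · intro x
    exact (isCong_cgGen B _).1.refl _
  · intro x y h'
    exact (isCong_cgGen B _).1.symm h'
  · intro x y z h1 h2
    exact (isCong_cgGen B _).1.trans h1 h2
  · intro o as bs hcomp
    rw [f.map_op, f.map_op]
    exact (isCong_cgGen B _).2 o _ _ hcomp
  · intro pr hpr
    exact mem_cgGen (Set.mem_image_of_mem _ hpr)

def congSetoid (A : Alg σ) (r : A.carrier → A.carrier → Prop) (h : IsCong A r) :
    Setoid A.carrier := ⟨r, h.1⟩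

noncomputable def QuotAlg (A : Alg σ) (r : A.carrier → A.carrier → Prop) (h : IsCong A r) : Alg σ where
  carrier := Quotient (congSetoid A r h)
  interp o as := Quotient.mk _ (A.interp o fun i => (as i).out)

def projHom (A : Alg σ) (r : A.carrier → A.carrier → Prop) (h : IsCong A r) :
    Hom A (QuotAlg A r h) where
  toFun := Quotient.mk _
  map_op o as := Quotient.sound (h.2 o _ _ fun i =>
    h.1.symm (Quotient.exact (Quotient.out_eq (Quotient.mk (congSetoid A r h) (as i)))))

theorem proj_surj (A : Alg σ) (r) (h : IsCong A r) :
    Function.Surjective (projHom A r h).toFun :=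
  fun q => ⟨q.out, Quotient.out_eq q⟩

theorem ker_proj (A : Alg σ) (r) (h : IsCong A r) : kerHom (projHom A r h) = r := by
  funext a b
  exact propext ⟨fun e => Quotient.exact e, fun e => Quotient.sound e⟩

theorem quotAlg_models {A : Alg σ} (hA : A.Models E) (r) (h : IsCong A r) :
    (QuotAlg A r h).Models E := by
  intro pr hp v
  have key : ∀ s : Term σ ℕ, s.eval (QuotAlg A r h) v
      = (projHom A r h).toFun (s.eval A fun n => (v n).out) := by
    intro s
    have hv : v = fun n => (projHom A r h).toFun (v n).out :=
      funext fun n => (Quotient.out_eq (v n)).symm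
    conv_lhs => rw [hv]
    exact (hom_eval _ _ _).symm
  rw [key, key]
  exact congrArg _ (hA pr hp _)


theorem rel_of_proj {A : Alg σ} {r} {h : IsCong A r} {a b : A.carrier}
    (heq : (projHom A r h).toFun a = (projHom A r h).toFun b) : r a b :=
  Quotient.exact heq

theorem proj_of_rel {A : Alg σ} {r} {h : IsCong A r} {a b : A.carrier}
    (hr : r a b) : (projHom A r h).toFun a = (projHom A r h).toFun b :=
  Quotient.sound hr

theorem free_rep {X : Type} (a : (FreeAlg σ E X).carrier) :
    ∃ s : Term σ X, fmk (E := E) s = a :=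
  Quotient.exists_rep a

theorem termRel_of_mk {X : Type} {s u : Term σ X} (h : fmk (E := E) s = fmk u) :
    TermRel σ E X s u :=
  Quotient.exact h

theorem subGen_subalg (A : Alg σ) (G : Set A.carrier) : IsSubalg A (subGen A G) :=
  fun o as h T hT hG => hT o as fun i => h i T hT hG

theorem subset_subGen (A : Alg σ) (G : Set A.carrier) : G ⊆ subGen A G :=
  fun _ ha _ _ hG => hG ha

theorem subGen_min {A : Alg σ} {G T : Set A.carrier} (hT : IsSubalg A T) (hG : G ⊆ T) :
    subGen A G ⊆ T := fun _ ha => ha T hT hG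

theorem range_subalg {A B : Alg σ} (f : Hom A B) : IsSubalg B (Set.range f.toFun) := by
  intro o as h
  choose g hg using h
  exact ⟨A.interp o g, by rw [f.map_op]; exact congrArg _ (funext hg)⟩

theorem eval_mem {A : Alg σ} {S : Set A.carrier} (hS : IsSubalg A S) {X : Type}
    {v : X → A.carrier} (hv : ∀ x, v x ∈ S) : ∀ s : Term σ X, s.eval A v ∈ S
  | .var x => hv x
  | .op o ts => hS o _ fun i => eval_mem hS hv (ts i)

theorem subAlg_models {A : Alg σ} (hA : A.Models E) {S : Set A.carrier}
    (hS : IsSubalg A S) : (A.subAlg S hS).Models E := by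
  intro pr hp v
  let ι : Hom (A.subAlg S hS) A := ⟨Subtype.val, fun o as => rfl⟩
  apply Subtype.ext
  have h1 := hom_eval ι v pr.1
  have h2 := hom_eval ι v pr.2
  show ι.toFun _ = ι.toFun _
  rw [h1, h2]
  exact hA pr hp _

theorem setle {N M : ℕ} (h : N ≤ M) : {k : ℕ | k ≤ N} ⊆ {k : ℕ | k ≤ M} :=
  fun _ hk => le_trans hk h

theorem cgGen_chain {A : Alg σ} (e : ℕ → A.carrier × A.carrier) {a b}
    (h : cgGen A (Set.range e) a b) :
    ∃ N, cgGen A (e '' {k | k ≤ N}) a b := by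
  refine h (fun x y => ∃ N, cgGen A (e '' {k | k ≤ N}) x y) ⟨⟨?_, ?_, ?_⟩, ?_⟩ ?_
  · exact fun x => ⟨0, (isCong_cgGen A _).1.refl x⟩
  · rintro x y ⟨N, hN⟩
    exact ⟨N, (isCong_cgGen A _).1.symm hN⟩
  · rintro x y z ⟨N1, h1⟩ ⟨N2, h2⟩
    exact ⟨max N1 N2, (isCong_cgGen A _).1.trans
      (cgGen_mono (Set.image_mono (f := e) (setle (le_max_left _ _))) h1)
      (cgGen_mono (Set.image_mono (f := e) (setle (le_max_right _ _))) h2)⟩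
  · intro o as bs hcomp
    choose Ns hNs using hcomp
    refine ⟨Finset.univ.sup Ns, (isCong_cgGen A _).2 o as bs fun i => ?_⟩
    exact cgGen_mono (Set.image_mono (f := e) (setle (Finset.le_sup (Finset.mem_univ i)))) (hNs i)
  · rintro pr ⟨k, rfl⟩
    refine ⟨k, mem_cgGen ?_⟩
    exact Set.mem_image_of_mem e (le_refl k)

theorem cgGen_chain_finite {A : Alg σ} (e : ℕ → A.carrier × A.carrier)
    {P : Set (A.carrier × A.carrier)} (hP : P.Finite)
    (h : ∀ pr ∈ P, cgGen A (Set.range e) pr.1 pr.2) :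
    ∃ N, ∀ pr ∈ P, cgGen A (e '' {k | k ≤ N}) pr.1 pr.2 := by
  classical
  revert h
  refine Set.Finite.induction_on (motive := fun P _ => (∀ pr ∈ P, cgGen A (Set.range e) pr.1 pr.2) →
    ∃ N, ∀ pr ∈ P, cgGen A (e '' {k | k ≤ N}) pr.1 pr.2) P hP ?_ ?_
  · exact fun _ => ⟨0, fun pr hpr => absurd hpr (Set.notMem_empty pr)⟩
  · intro x s hx hs ih h
    obtain ⟨N1, hN1⟩ := ih fun pr hpr => h pr (Set.mem_insert_of_mem x hpr)
    obtain ⟨N2, hN2⟩ := cgGen_chain e (h x (Set.mem_insert x s))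
    refine ⟨max N1 N2, fun pr hpr => ?_⟩
    rcases hpr with rfl | hpr
    · exact cgGen_mono (Set.image_mono (f := e) (setle (le_max_right _ _))) hN2
    · exact cgGen_mono (Set.image_mono (f := e) (setle (le_max_left _ _))) (hN1 pr hpr)

end S4
namespace S4

variable {σ : Signature} {E : EqTheory σ}

section Ops

variable (mt : Term σ (Fin 2)) (t : Term σ (Fin 1))

def meetT {X : Type} (a b : Term σ X) : Term σ X := tsubst ![a, b] mt

def tT {X : Type} (a : Term σ X) : Term σ X := tsubst ![a] t

def tpow {X : Type} : ℕ → Term σ X → Term σ X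
  | 0, a => a
  | k+1, a => tT t (tpow k a)

theorem eval_meetT {X : Type} (A : Alg σ) (v : X → A.carrier) (a b : Term σ X) :
    (meetT mt a b).eval A v = meet2 A mt (a.eval A v) (b.eval A v) := by
  show (tsubst ![a, b] mt).eval A v = mt.eval A ![a.eval A v, b.eval A v]
  rw [eval_tsubst]
  refine congrArg (mt.eval A) (funext fun i => ?_)
  fin_cases i <;> simp

theorem eval_tT {X : Type} (A : Alg σ) (v : X → A.carrier) (a : Term σ X) :
    (tT t a).eval A v = app1 A t (a.eval A v) := by
  show (tsubst ![a] t).eval A v = t.eval A ![a.eval A v]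
  rw [eval_tsubst]
  refine congrArg (t.eval A) (funext fun i => ?_)
  fin_cases i <;> simp

theorem eval_tpow {X : Type} (A : Alg σ) (v : X → A.carrier) (k : ℕ) (a : Term σ X) :
    (tpow t k a).eval A v = (app1 A t)^[k] (a.eval A v) := by
  induction k with
  | zero => rfl
  | succ k ih =>
    rw [show tpow t (k+1) a = tT t (tpow t k a) from rfl, eval_tT, ih,
      Function.iterate_succ_apply']

theorem hom_app1 {A B : Alg σ} (f : Hom A B) (a : A.carrier) :
    f.toFun (app1 A t a) = app1 B t (f.toFun a) := by
  show f.toFun (t.eval A ![a]) = t.eval B ![f.toFun a]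
  rw [hom_eval]
  refine congrArg (t.eval B) (funext fun i => ?_)
  fin_cases i <;> simp

theorem hom_app1_iter {A B : Alg σ} (f : Hom A B) (k : ℕ) (a : A.carrier) :
    f.toFun ((app1 A t)^[k] a) = (app1 B t)^[k] (f.toFun a) := by
  induction k with
  | zero => rfl
  | succ k ih =>
    rw [Function.iterate_succ_apply', Function.iterate_succ_apply', hom_app1, ih]

theorem hom_meet2 {A B : Alg σ} (f : Hom A B) (a b : A.carrier) :
    f.toFun (meet2 A mt a b) = meet2 B mt (f.toFun a) (f.toFun b) := by
  show f.toFun (mt.eval A ![a, b]) = mt.eval B ![f.toFun a, f.toFun b]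
  rw [hom_eval]
  refine congrArg (mt.eval B) (funext fun i => ?_)
  fin_cases i <;> simp

theorem mk_app1 {X : Type} (s : Term σ X) :
    app1 (FreeAlg σ E X) t (fmk s) = fmk (tT t s) := by
  show t.eval (FreeAlg σ E X) ![fmk s] = _
  rw [show (![fmk s] : Fin 1 → (FreeAlg σ E X).carrier) = fun i => fmk (![s] i) from
    funext fun i => by fin_cases i <;> simp]
  exact eval_mk _ t

theorem mk_meet2 {X : Type} (a b : Term σ X) :
    meet2 (FreeAlg σ E X) mt (fmk a) (fmk b) = fmk (meetT mt a b) := by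
  show mt.eval (FreeAlg σ E X) ![fmk a, fmk b] = _
  rw [show (![fmk a, fmk b] : Fin 2 → (FreeAlg σ E X).carrier) = fun i => fmk (![a, b] i) from
    funext fun i => by fin_cases i <;> simp]
  exact eval_mk _ mt

theorem mk_tpow {X : Type} (k : ℕ) (s : Term σ X) :
    (app1 (FreeAlg σ E X) t)^[k] (fmk s) = fmk (tpow t k s) := by
  induction k with
  | zero => rfl
  | succ k ih =>
    rw [Function.iterate_succ_apply', ih, mk_app1]
    rfl

theorem meet_trans (hsemi : SemilatticeTerm σ E mt) {A : Alg σ} (hA : A.Models E)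
    {a b c : A.carrier} (h1 : meet2 A mt a b = a) (h2 : meet2 A mt b c = b) :
    meet2 A mt a c = a := by
  obtain ⟨hassoc, hcomm, hidem⟩ := hsemi A hA
  calc meet2 A mt a c = meet2 A mt (meet2 A mt a b) c := by rw [h1]
    _ = meet2 A mt a (meet2 A mt b c) := hassoc a b c
    _ = meet2 A mt a b := by rw [h2]
    _ = a := h1

theorem pow_le (hsemi : SemilatticeTerm σ E mt) {A : Alg σ} (hA : A.Models E)
    (hdec : ∀ a : A.carrier, meet2 A mt (app1 A t a) a = app1 A t a)
    (a : A.carrier) {k N : ℕ} (h : k ≤ N) :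
    meet2 A mt ((app1 A t)^[N] a) ((app1 A t)^[k] a) = (app1 A t)^[N] a := by
  obtain ⟨m, rfl⟩ := Nat.exists_eq_add_of_le h
  clear h
  induction m with
  | zero => exact (hsemi A hA).2.2 _
  | succ m ih =>
    have hstep : meet2 A mt ((app1 A t)^[k+m+1] a) ((app1 A t)^[k+m] a)
        = (app1 A t)^[k+m+1] a := by
      rw [show k+m+1 = (k+m)+1 from rfl, Function.iterate_succ_apply']
      exact hdec _
    exact meet_trans mt hsemi hA hstep ih

end Ops

theorem presentation_transfer {X Y : Type} [Finite X] {C : Alg σ} (hC : C.Models E)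
    (p : Hom (FreeAlg σ E X) C) (q : Hom (FreeAlg σ E Y) C)
    (hp : Function.Surjective p.toFun) (hq : Function.Surjective q.toFun)
    {S0 : Set ((FreeAlg σ E Y).carrier × (FreeAlg σ E Y).carrier)} (hfin : S0.Finite)
    (hker : kerHom q = cgGen (FreeAlg σ E Y) S0) :
    ∃ P : Set ((FreeAlg σ E X).carrier × (FreeAlg σ E X).carrier), P.Finite ∧
      (∀ pr ∈ P, p.toFun pr.1 = p.toFun pr.2) ∧
      (∀ a b, p.toFun a = p.toFun b → cgGen (FreeAlg σ E X) P a b) := by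
  classical
  choose w hw using fun y : Y => hp (q.toFun (fmk (E := E) (.var y)))
  choose u hu using fun x : X => hq (p.toFun (fmk (E := E) (.var x)))
  let φ : Hom (FreeAlg σ E Y) (FreeAlg σ E X) := evalHom _ (freeAlg_models X) w
  let ψ : Hom (FreeAlg σ E X) (FreeAlg σ E Y) := evalHom _ (freeAlg_models Y) u
  have hpφ : ∀ a, p.toFun (φ.toFun a) = q.toFun a := by
    intro a
    refine hom_ext (homComp p φ) q (fun y => ?_) a
    show p.toFun (φ.toFun (fmk (.var y))) = _
    rw [show φ.toFun (fmk (E := E) (.var y)) = w y from rfl, hw]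
  have hqψ : ∀ a, q.toFun (ψ.toFun a) = p.toFun a := by
    intro a
    refine hom_ext (homComp q ψ) p (fun x => ?_) a
    show q.toFun (ψ.toFun (fmk (.var x))) = _
    rw [show ψ.toFun (fmk (E := E) (.var x)) = u x from rfl, hu]
  refine ⟨((fun pr => (φ.toFun pr.1, φ.toFun pr.2)) '' S0) ∪
      Set.range (fun x : X => (fmk (E := E) (.var x), φ.toFun (ψ.toFun (fmk (.var x))))),
    (hfin.image _).union (Set.finite_range _), ?_, ?_⟩
  · rintro pr (⟨⟨a, b⟩, hab, rfl⟩ | ⟨x, rfl⟩)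
    · show p.toFun (φ.toFun a) = p.toFun (φ.toFun b)
      rw [hpφ, hpφ]
      have : kerHom q a b := by
        rw [hker]
        exact mem_cgGen hab
      exact this
    · show p.toFun (fmk (.var x)) = p.toFun (φ.toFun (ψ.toFun (fmk (.var x))))
      rw [hpφ, hqψ]
  · intro a b hab
    set P := ((fun pr => (φ.toFun pr.1, φ.toFun pr.2)) '' S0) ∪
      Set.range (fun x : X => (fmk (E := E) (.var x), φ.toFun (ψ.toFun (fmk (.var x))))) with hP
    have step1 : ∀ c, cgGen (FreeAlg σ E X) P c (φ.toFun (ψ.toFun c)) := by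
      intro c
      induction c using Quotient.ind with
      | _ s =>
        induction s with
        | var x =>
          exact mem_cgGen
            (pr := (fmk (E := E) (.var x), φ.toFun (ψ.toFun (fmk (.var x)))))
            (Set.mem_union_right _ (Set.mem_range_self x))
        | op o ts ih =>
          have h1 : (Quotient.mk _ (Term.op o ts) : (FreeAlg σ E X).carrier)
              = (FreeAlg σ E X).interp o fun i => fmk (ts i) := (mk_op o ts).symm
          rw [h1]
          have h2 : φ.toFun (ψ.toFun ((FreeAlg σ E X).interp o fun i => fmk (ts i)))
              = (FreeAlg σ E X).interp o fun i => φ.toFun (ψ.toFun (fmk (ts i))) := by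
            rw [ψ.map_op, φ.map_op]
          rw [h2]
          exact (isCong_cgGen _ _).2 o _ _ fun i => ih i
    have step2 : cgGen (FreeAlg σ E Y) S0 (ψ.toFun a) (ψ.toFun b) := by
      rw [← hker]
      show q.toFun _ = q.toFun _
      rw [hqψ, hqψ]
      exact hab
    have step3 := cgGen_map φ S0 step2
    have step4 : cgGen (FreeAlg σ E X) P (φ.toFun (ψ.toFun a)) (φ.toFun (ψ.toFun b)) :=
      cgGen_mono Set.subset_union_left step3
    exact (isCong_cgGen _ _).1.trans (step1 a)
      ((isCong_cgGen _ _).1.trans step4 ((isCong_cgGen _ _).1.symm (step1 b)))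

end S4
/-- Theorem 3.1: let `V` be a variety with a term-definable
meet-semilattice reduct and `t` a unary term with `V ⊨ t(x) ≤ x` that is
order-preserving in `V`.  If `V` satisfies the fixpoint embedding condition with
respect to `t` and `V` is coherent, then `t` is `n`-potent for some `n`. -/
theorem stmt4 (σ : Signature) (hconst : ∃ o : σ.Op, σ.arity o = 0) (E : EqTheory σ)
    (mt : Term σ (Fin 2)) (t : Term σ (Fin 1))
    (hsemi : SemilatticeTerm σ E mt)
    -- `V ⊨ t(x) ≤ x` :
    (hdec : ∀ A : Alg σ, A.Models E → ∀ a : A.carrier,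
      meet2 A mt (app1 A t a) a = app1 A t a)
    -- `t` is order-preserving in `V` :
    (hmono : ∀ A : Alg σ, A.Models E → ∀ a b : A.carrier,
      meet2 A mt a b = a → meet2 A mt (app1 A t a) (app1 A t b) = app1 A t a)
    -- fixpoint embedding condition (FE) :
    (hFE : ∀ A : Alg σ, A.Models E → FinGenerated σ E A → ∀ a : A.carrier,
      ∃ B : Alg σ, B.Models E ∧ ∃ j : Hom A B, Function.Injective j.toFun ∧
        ∃ m : B.carrier,
          (∀ k : ℕ, meet2 B mt m ((app1 B t)^[k] (j.toFun a)) = m) ∧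
          (∀ c : B.carrier, (∀ k : ℕ, meet2 B mt c ((app1 B t)^[k] (j.toFun a)) = c) →
            meet2 B mt c m = c) ∧
          app1 B t m = m)
    (hcoh : Coherent σ E) :
    ∃ n : ℕ, ∀ A : Alg σ, A.Models E → ∀ a : A.carrier,
      (app1 A t)^[n + 1] a = (app1 A t)^[n] a := by
  classical
  let F1 := FreeAlg σ E (Fin 1)
  let F2 := FreeAlg σ E (Fin 2)
  let F3 := FreeAlg σ E (Fin 3)
  have hF1 : F1.Models E := S4.freeAlg_models _
  have hF2 : F2.Models E := S4.freeAlg_models _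
  have hF3 : F3.Models E := S4.freeAlg_models _
  let yT : Term σ (Fin 3) := .var (Fin.last 2)
  let xT : Term σ (Fin 3) := .var (Fin.castSucc 0)
  let zT : Term σ (Fin 3) := .var (Fin.castSucc 1)
  let Sgen : Set (F3.carrier × F3.carrier) :=
    {(S4.fmk (S4.tT t yT), S4.fmk yT),
     (S4.fmk (S4.meetT mt yT xT), S4.fmk yT),
     (S4.fmk (S4.meetT mt zT yT), S4.fmk zT)}
  have hSgenFin : Sgen.Finite := ((Set.finite_singleton _).insert _).insert _
  let Θ := cgGen F3 Sgen
  have hΘ : IsCong F3 Θ := S4.isCong_cgGen _ _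
  let D := S4.QuotAlg F3 Θ hΘ
  let π := S4.projHom F3 Θ hΘ
  have hD : D.Models E := S4.quotAlg_models hF3 Θ hΘ
  let vD : Fin 2 → D.carrier := fun i => π.toFun (S4.fmk (.var (Fin.castSucc i)))
  let p : Hom F2 D := S4.evalHom D hD vD
  have hgen : ∀ pr ∈ Sgen, π.toFun pr.1 = π.toFun pr.2 := fun pr hpr =>
    S4.proj_of_rel (S4.mem_cgGen hpr)
  have g1 : app1 D t (π.toFun (S4.fmk yT)) = π.toFun (S4.fmk yT) := by
    rw [← S4.hom_app1 t π, S4.mk_app1]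
    exact hgen _ (Set.mem_insert _ _)
  have g2 : meet2 D mt (π.toFun (S4.fmk yT)) (π.toFun (S4.fmk xT)) = π.toFun (S4.fmk yT) := by
    rw [← S4.hom_meet2 mt π, S4.mk_meet2]
    exact hgen _ (Set.mem_insert_of_mem _ (Set.mem_insert _ _))
  have g3 : meet2 D mt (π.toFun (S4.fmk zT)) (π.toFun (S4.fmk yT)) = π.toFun (S4.fmk zT) := by
    rw [← S4.hom_meet2 mt π, S4.mk_meet2]
    exact hgen _ (Set.mem_insert_of_mem _ (Set.mem_insert_of_mem _ (Set.mem_singleton _)))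
  have hyk : ∀ k, meet2 D mt (π.toFun (S4.fmk yT)) ((app1 D t)^[k] (π.toFun (S4.fmk xT)))
      = π.toFun (S4.fmk yT) := by
    intro k
    induction k with
    | zero => exact g2
    | succ k ih =>
      have hstep := hmono D hD _ _ ih
      rw [g1] at hstep
      rw [Function.iterate_succ_apply']
      exact hstep
  have hzk : ∀ k, meet2 D mt (π.toFun (S4.fmk zT)) ((app1 D t)^[k] (π.toFun (S4.fmk xT)))
      = π.toFun (S4.fmk zT) := fun k => S4.meet_trans mt hsemi hD g3 (hyk k)
  let e : ℕ → F2.carrier × F2.carrier := fun k =>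
    (S4.fmk (S4.meetT mt (.var 1) (S4.tpow t k (.var 0))), S4.fmk (.var 1))
  have hpe : ∀ k, p.toFun (e k).1 = p.toFun (e k).2 := by
    intro k
    show (S4.meetT mt (.var 1) (S4.tpow t k (.var 0))).eval D vD
        = (Term.var (1 : Fin 2)).eval D vD
    rw [S4.eval_meetT, S4.eval_tpow]
    exact hzk k
  -- the congruence generated by the infinite family, and the fixpoint extension
  let r' := cgGen F2 (Set.range e)
  have hr' : IsCong F2 r' := S4.isCong_cgGen _ _
  let Q := S4.QuotAlg F2 r' hr'
  let πQ := S4.projHom F2 r' hr'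
  have hQ : Q.Models E := S4.quotAlg_models hF2 r' hr'
  have hQfg : FinGenerated σ E Q := ⟨2, πQ, S4.proj_surj _ _ _⟩
  obtain ⟨B, hB, j, hj, m, hm1, hm2, hm3⟩ := hFE Q hQ hQfg (πQ.toFun (S4.fmk (.var 0)))
  let wB : Fin 3 → B.carrier :=
    Fin.snoc (fun i' : Fin 2 => j.toFun (πQ.toFun (S4.fmk (.var i')))) m
  have hwlast : wB (Fin.last 2) = m := Fin.snoc_last _ _
  have hwcast : ∀ i : Fin 2, wB (Fin.castSucc i) = j.toFun (πQ.toFun (S4.fmk (.var i))) :=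
    fun i => Fin.snoc_castSucc _ _ i
  have hQk : ∀ k, meet2 Q mt (πQ.toFun (S4.fmk (.var 1)))
      ((app1 Q t)^[k] (πQ.toFun (S4.fmk (.var 0)))) = πQ.toFun (S4.fmk (.var 1)) := by
    intro k
    rw [← S4.hom_app1_iter t πQ, S4.mk_tpow, ← S4.hom_meet2 mt πQ, S4.mk_meet2]
    exact S4.proj_of_rel (S4.mem_cgGen (Set.mem_range_self k))
  let h3 : Hom F3 B := S4.evalHom B hB wB
  have hSgenKer : ∀ pr ∈ Sgen, h3.toFun pr.1 = h3.toFun pr.2 := by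
    rintro pr (rfl | rfl | rfl)
    · show (S4.tT t yT).eval B wB = yT.eval B wB
      rw [S4.eval_tT]
      show app1 B t (wB (Fin.last 2)) = wB (Fin.last 2)
      rw [hwlast]
      exact hm3
    · show (S4.meetT mt yT xT).eval B wB = yT.eval B wB
      rw [S4.eval_meetT]
      show meet2 B mt (wB (Fin.last 2)) (wB (Fin.castSucc 0)) = wB (Fin.last 2)
      rw [hwlast, hwcast]
      exact hm1 0
    · show (S4.meetT mt zT yT).eval B wB = zT.eval B wB
      rw [S4.eval_meetT]
      show meet2 B mt (wB (Fin.castSucc 1)) (wB (Fin.last 2)) = wB (Fin.castSucc 1)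
      rw [hwlast, hwcast]
      refine hm2 _ (fun k => ?_)
      rw [← S4.hom_app1_iter t j, ← S4.hom_meet2 mt j, hQk k]
  have hθh3 : ∀ {a b : F3.carrier}, Θ a b → h3.toFun a = h3.toFun b :=
    fun h => S4.cgGen_le (S4.isCong_ker h3) hSgenKer h
  have claimB : ∀ a b : F2.carrier, p.toFun a = p.toFun b → r' a b := by
    intro a b hab
    obtain ⟨s, rfl⟩ := S4.free_rep a
    obtain ⟨u, rfl⟩ := S4.free_rep b
    have hps : ∀ s' : Term σ (Fin 2),
        π.toFun (S4.fmk (Term.rename Fin.castSucc s')) = p.toFun (S4.fmk s') := by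
      intro s'
      rw [S4.hom_mk π, Term.eval_rename]
      rfl
    have hπe : π.toFun (S4.fmk (Term.rename Fin.castSucc s))
        = π.toFun (S4.fmk (Term.rename Fin.castSucc u)) := by
      rw [hps, hps]
      exact hab
    have hrel : Θ (S4.fmk (Term.rename Fin.castSucc s)) (S4.fmk (Term.rename Fin.castSucc u)) :=
      S4.rel_of_proj hπe
    have heq := hθh3 hrel
    have h1 : ∀ s' : Term σ (Fin 2), h3.toFun (S4.fmk (Term.rename Fin.castSucc s'))
        = s'.eval B (fun i => j.toFun (πQ.toFun (S4.fmk (.var i)))) := by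
      intro s'
      show (Term.rename Fin.castSucc s').eval B wB = _
      rw [Term.eval_rename]
      exact congrArg (s'.eval B) (funext fun i => hwcast i)
    rw [h1, h1] at heq
    have h2 : ∀ s' : Term σ (Fin 2), j.toFun (πQ.toFun (S4.fmk s'))
        = s'.eval B (fun i => j.toFun (πQ.toFun (S4.fmk (.var i)))) := by
      intro s'
      show (S4.homComp j πQ).toFun (S4.fmk s') = _
      rw [S4.hom_mk]
      rfl
    rw [← h2, ← h2] at heq
    exact S4.rel_of_proj (hj heq)
  -- coherence gives a finite presentation of the subalgebra generated by the images
  have hDfp : FinPresented σ E D :=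
    ⟨3, π, S4.proj_surj _ _ _, Sgen, hSgenFin, S4.ker_proj _ _ _⟩
  let G : Set D.carrier := Set.range vD
  let SD := subGen D G
  have hSD : IsSubalg D SD := S4.subGen_subalg D G
  obtain ⟨nk, q, hqsurj, S0, hS0fin, hkerq⟩ :=
    hcoh D hD hDfp SD hSD ⟨G, Set.finite_range _, rfl⟩
  have hmemp : ∀ a : F2.carrier, p.toFun a ∈ SD := by
    intro a
    obtain ⟨s, rfl⟩ := S4.free_rep a
    show s.eval D vD ∈ SD
    exact S4.eval_mem hSD (fun i => S4.subset_subGen D G (Set.mem_range_self i)) s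
  let p' : Hom F2 (D.subAlg SD hSD) :=
    ⟨fun a => ⟨p.toFun a, hmemp a⟩, fun o as => Subtype.ext (p.map_op o as)⟩
  have hp'surj : Function.Surjective p'.toFun := by
    intro c
    have hsub : SD ⊆ Set.range p.toFun := by
      refine S4.subGen_min (S4.range_subalg p) ?_
      rintro _ ⟨i, rfl⟩
      exact ⟨S4.fmk (.var i), rfl⟩
    obtain ⟨a, ha⟩ := hsub c.2
    exact ⟨a, Subtype.ext ha⟩
  obtain ⟨P, hPfin, hPker, hPgen⟩ := S4.presentation_transfer
    (S4.subAlg_models hD hSD) p' q hp'surj hqsurj hS0fin hkerq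
  have hPe : ∀ pr ∈ P, r' pr.1 pr.2 := fun pr hpr =>
    claimB pr.1 pr.2 (congrArg Subtype.val (hPker pr hpr))
  obtain ⟨N, hN⟩ := S4.cgGen_chain_finite e hPfin hPe
  have hkey : cgGen F2 (e '' {k | k ≤ N}) (e (N+1)).1 (e (N+1)).2 := by
    have h1 : p'.toFun (e (N+1)).1 = p'.toFun (e (N+1)).2 := Subtype.ext (hpe (N+1))
    exact S4.cgGen_le (S4.isCong_cgGen _ _) hN (hPgen _ _ h1)
  -- substitute z := t^N(x)
  let vg : Fin 2 → F1.carrier := fun i =>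
    if i = 0 then S4.fmk (.var 0) else (app1 F1 t)^[N] (S4.fmk (.var 0))
  let g : Hom F2 F1 := S4.evalHom F1 hF1 vg
  have hgval : ∀ k, g.toFun (e k).1
      = meet2 F1 mt ((app1 F1 t)^[N] (S4.fmk (.var 0)))
          ((app1 F1 t)^[k] (S4.fmk (.var 0))) := by
    intro k
    show (S4.meetT mt (.var 1) (S4.tpow t k (.var 0))).eval F1 vg = _
    rw [S4.eval_meetT, S4.eval_tpow]
    show meet2 F1 mt (vg 1) ((app1 F1 t)^[k] (vg 0)) = _
    rw [show vg 1 = (app1 F1 t)^[N] (S4.fmk (.var 0)) from if_neg (by decide),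
        show vg 0 = S4.fmk (.var 0) from if_pos rfl]
  have hgval2 : ∀ k : ℕ, g.toFun (e k).2 = (app1 F1 t)^[N] (S4.fmk (.var 0)) := by
    intro k
    show vg 1 = _
    exact if_neg (by decide)
  have hfinal1 : g.toFun (e (N+1)).1 = g.toFun (e (N+1)).2 := by
    refine S4.cgGen_le (S4.isCong_eq F1) ?_ (S4.cgGen_map g _ hkey)
    rintro _ ⟨_, ⟨k, hk, rfl⟩, rfl⟩
    show g.toFun (e k).1 = g.toFun (e k).2
    rw [hgval k, hgval2 k]
    exact S4.pow_le mt t hsemi hF1 (hdec F1 hF1) _ hk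
  rw [hgval (N+1), hgval2 (N+1)] at hfinal1
  have hother : meet2 F1 mt ((app1 F1 t)^[N+1] (S4.fmk (.var 0)))
      ((app1 F1 t)^[N] (S4.fmk (.var 0))) = (app1 F1 t)^[N+1] (S4.fmk (.var 0)) := by
    rw [Function.iterate_succ_apply']
    exact hdec F1 hF1 _
  have hNN : (app1 F1 t)^[N+1] (S4.fmk (.var 0)) = (app1 F1 t)^[N] (S4.fmk (.var 0)) := by
    rw [← hother, (hsemi F1 hF1).2.1]
    exact hfinal1
  rw [S4.mk_tpow, S4.mk_tpow] at hNN
  have hTR : TermRel σ E (Fin 1) (S4.tpow t (N+1) (.var 0)) (S4.tpow t N (.var 0)) :=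
    S4.termRel_of_mk hNN
  refine ⟨N, fun A hA a => ?_⟩
  have hfin := hTR A hA (fun _ => a)
  rw [S4.eval_tpow, S4.eval_tpow] at hfin
  exact hfin
end

section
/- The canonical extension of a Boolean algebra is a Boolean algebra; more concretely: if B is a Boolean algebra and C is a complete lattice containing B via a dense and compact completion, with complement extended by ¬^σ(x) = ⨆{⨅{¬a | a ∈ B, p ≤ a ≤ q} | p closed, q open, p ≤ x ≤ q}, then ¬^σ is the Boolean complement in C, i.e., x ∧ ¬^σ x = 0 and x ∨ ¬^σ x = 1 for all x ∈ C. -/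
section CanExt

variable {P C : Type*} [Preorder P] [CompleteLattice C]

/-- Closed elements: meets of elements of the image of `e`. -/
def IsClosedEl (e : P ↪o C) (c : C) : Prop := ∃ S : Set P, c = ⨅ a ∈ S, e a

/-- Open elements: joins of elements of the image of `e`. -/
def IsOpenEl (e : P ↪o C) (c : C) : Prop := ∃ S : Set P, c = ⨆ a ∈ S, e a

/-- Dense completion. -/
def DenseCompletion (e : P ↪o C) : Prop :=
  ∀ c : C, c = sSup {k | IsClosedEl e k ∧ k ≤ c} ∧ c = sInf {u | IsOpenEl e u ∧ c ≤ u}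

/-- Compact completion. -/
def CompactCompletion (e : P ↪o C) : Prop :=
  ∀ A B : Set C, (∀ k ∈ A, IsClosedEl e k) → (∀ u ∈ B, IsOpenEl e u) → sInf A ≤ sSup B →
    ∃ A₀ B₀ : Set C, A₀ ⊆ A ∧ B₀ ⊆ B ∧ A₀.Finite ∧ B₀.Finite ∧ sInf A₀ ≤ sSup B₀

end CanExt

/-- The σ-extension of the Boolean complement:
`¬^σ(x) = ⨆ { ⨅ {¬a | a ∈ B, p ≤ a ≤ q} | p closed, q open, p ≤ x ≤ q }`. -/
def negSigma {B C : Type*} [BooleanAlgebra B] [CompleteLattice C] (e : B ↪o C)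
    (x : C) : C :=
  sSup {z | ∃ p q : C, IsClosedEl e p ∧ IsOpenEl e q ∧ p ≤ x ∧ x ≤ q ∧
    z = sInf {w | ∃ a : B, p ≤ e a ∧ e a ≤ q ∧ w = e aᶜ}}

section AuxLemmas

variable {B C : Type*} [BooleanAlgebra B] [CompleteLattice C] (e : B ↪o C)

lemma e_finset_inf (htop : e ⊤ = ⊤) (hinf : ∀ a b : B, e (a ⊓ b) = e a ⊓ e b)
    {α : Type*} (s : Finset α) (f : α → B) : e (s.inf f) = s.inf (fun a => e (f a)) := by
  classical
  induction s using Finset.cons_induction with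
  | empty => simpa using htop
  | cons a s ha ih => simp [Finset.inf_cons, hinf, ih]

lemma e_finset_sup (hbot : e ⊥ = ⊥) (hsup : ∀ a b : B, e (a ⊔ b) = e a ⊔ e b)
    {α : Type*} (s : Finset α) (f : α → B) : e (s.sup f) = s.sup (fun a => e (f a)) := by
  classical
  induction s using Finset.cons_induction with
  | empty => simpa using hbot
  | cons a s ha ih => simp [Finset.sup_cons, hsup, ih]

lemma closed_repr {c : C} (h : IsClosedEl e c) : ∃ S : Set B, c = sInf (e '' S) := by
  obtain ⟨S, hS⟩ := h; exact ⟨S, by rw [hS, sInf_image]⟩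

lemma open_repr {c : C} (h : IsOpenEl e c) : ∃ S : Set B, c = sSup (e '' S) := by
  obtain ⟨S, hS⟩ := h; exact ⟨S, by rw [hS, sSup_image]⟩

lemma closed_e (a : B) : IsClosedEl e (e a) := ⟨{a}, by simp⟩

lemma open_e (a : B) : IsOpenEl e (e a) := ⟨{a}, by simp⟩

lemma lcomp (hcompact : CompactCompletion e) (S T : Set B)
    (h : sInf (e '' S) ≤ sSup (e '' T)) :
    ∃ s t : Finset B, ↑s ⊆ S ∧ ↑t ⊆ T ∧ e (s.inf id) ≤ e (t.sup id) := by
  obtain ⟨A₀, B₀, hA₀, hB₀, hAf, hBf, hle⟩ :=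
    hcompact (e '' S) (e '' T)
      (by rintro k ⟨a, _, rfl⟩; exact closed_e e a)
      (by rintro u ⟨a, _, rfl⟩; exact open_e e a) h
  obtain ⟨U, hUS, hUe⟩ := Set.subset_image_iff.mp hA₀
  obtain ⟨V, hVT, hVe⟩ := Set.subset_image_iff.mp hB₀
  have hUfin : U.Finite := Set.Finite.of_finite_image (hUe ▸ hAf) e.injective.injOn
  have hVfin : V.Finite := Set.Finite.of_finite_image (hVe ▸ hBf) e.injective.injOn
  refine ⟨hUfin.toFinset, hVfin.toFinset, by simpa using hUS, by simpa using hVT, ?_⟩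
  have h1 : e (hUfin.toFinset.inf id) ≤ sInf A₀ := by
    apply le_sInf
    rintro w hw
    rw [← hUe] at hw
    obtain ⟨a, ha, rfl⟩ := hw
    exact e.monotone (Finset.inf_le (by simpa using ha))
  have h2 : sSup B₀ ≤ e (hVfin.toFinset.sup id) := by
    apply sSup_le
    rintro w hw
    rw [← hVe] at hw
    obtain ⟨a, ha, rfl⟩ := hw
    exact e.monotone (Finset.le_sup (f := id) (by simpa using ha))
  exact h1.trans (hle.trans h2)

lemma linterp1 (hcompact : CompactCompletion e) (hbot : e ⊥ = ⊥)
    (hsup : ∀ a b : B, e (a ⊔ b) = e a ⊔ e b)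
    (S : Set B) {u : C} (hu : IsOpenEl e u) (h : sInf (e '' S) ≤ u) :
    ∃ s : Finset B, ↑s ⊆ S ∧ e (s.inf id) ≤ u := by
  obtain ⟨T, rfl⟩ := open_repr e hu
  obtain ⟨s, t, hs, ht, hle⟩ := lcomp e hcompact S T h
  refine ⟨s, hs, hle.trans ?_⟩
  rw [e_finset_sup e hbot hsup]
  exact Finset.sup_le fun c hc => le_sSup ⟨c, ht hc, rfl⟩

lemma linterp2 (hcompact : CompactCompletion e) (hbot : e ⊥ = ⊥) (htop : e ⊤ = ⊤)
    (hinf : ∀ a b : B, e (a ⊓ b) = e a ⊓ e b) (hsup : ∀ a b : B, e (a ⊔ b) = e a ⊔ e b)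
    {p q : C} (hp : IsClosedEl e p) (hq : IsOpenEl e q) (h : p ≤ q) :
    ∃ a : B, p ≤ e a ∧ e a ≤ q := by
  obtain ⟨S, rfl⟩ := closed_repr e hp
  obtain ⟨s, hs, hle⟩ := linterp1 e hcompact hbot hsup S hq h
  refine ⟨s.inf id, ?_, hle⟩
  rw [e_finset_inf e htop hinf]
  exact Finset.le_inf fun a ha => sInf_le ⟨a, hs ha, rfl⟩

lemma closed_sup (hcompact : CompactCompletion e) (hdense : DenseCompletion e)
    (hbot : e ⊥ = ⊥) (htop : e ⊤ = ⊤)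
    (hinf : ∀ a b : B, e (a ⊓ b) = e a ⊓ e b) (hsup : ∀ a b : B, e (a ⊔ b) = e a ⊔ e b)
    {p k : C} (hp : IsClosedEl e p) (hk : IsClosedEl e k) : IsClosedEl e (p ⊔ k) := by
  obtain ⟨S₁, rfl⟩ := closed_repr e hp
  obtain ⟨S₂, rfl⟩ := closed_repr e hk
  set U : Set B := {c | ∃ a ∈ S₁, ∃ b ∈ S₂, c = a ⊔ b} with hU
  refine ⟨U, ?_⟩
  rw [← sInf_image]
  apply le_antisymm
  · apply le_sInf
    rintro w ⟨c, ⟨a, ha, b, hb, rfl⟩, rfl⟩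
    rw [hsup]
    have h1 : sInf (e '' S₁) ≤ e a := sInf_le ⟨a, ha, rfl⟩
    have h2 : sInf (e '' S₂) ≤ e b := sInf_le ⟨b, hb, rfl⟩
    exact sup_le (h1.trans le_sup_left) (h2.trans le_sup_right)
  · have hd := (hdense (sInf (e '' S₁) ⊔ sInf (e '' S₂))).2
    calc sInf (e '' S₁) ⊔ sInf (e '' S₂)
        = sInf {u | IsOpenEl e u ∧ sInf (e '' S₁) ⊔ sInf (e '' S₂) ≤ u} := hd
      _ ≥ sInf (e '' U) := by
          apply le_sInf
          rintro u ⟨huo, hle⟩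
          obtain ⟨s₁, hs₁, h₁⟩ := linterp1 e hcompact hbot hsup S₁ huo
            (le_sup_left.trans hle)
          obtain ⟨s₂, hs₂, h₂⟩ := linterp1 e hcompact hbot hsup S₂ huo
            (le_sup_right.trans hle)
          have key : sInf (e '' U) ≤ e (s₁.inf id ⊔ s₂.inf id) := by
            rw [Finset.inf_sup_distrib_right, e_finset_inf e htop hinf]
            refine Finset.le_inf fun a ha => ?_
            rw [Finset.inf_sup_distrib_left, e_finset_inf e htop hinf]
            refine Finset.le_inf fun b hb => ?_
            exact sInf_le ⟨a ⊔ b, ⟨a, hs₁ ha, b, hs₂ hb, rfl⟩, rfl⟩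
          refine key.trans ?_
          rw [hsup]
          exact sup_le h₁ h₂

end AuxLemmas

/-- if `C` is a dense and compact completion of a Boolean algebra `B`
(with `e` preserving finite meets, joins and the bounds), then the σ-extension of
the complement is the Boolean complement in `C`:
`x ⊓ ¬^σ x = ⊥` and `x ⊔ ¬^σ x = ⊤` for all `x ∈ C`. -/
theorem stmt12 {B C : Type*} [BooleanAlgebra B] [CompleteLattice C] (e : B ↪o C)
    (hinf : ∀ a b : B, e (a ⊓ b) = e a ⊓ e b)
    (hsup : ∀ a b : B, e (a ⊔ b) = e a ⊔ e b)
    (htop : e ⊤ = ⊤) (hbot : e ⊥ = ⊥)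
    (hdense : DenseCompletion e) (hcompact : CompactCompletion e) :
    ∀ x : C, x ⊓ negSigma e x = ⊥ ∧ x ⊔ negSigma e x = ⊤ := by
  intro x
  constructor
  · -- meet part
    refine le_bot_iff.mp ?_
    have h1 := (hdense (x ⊓ negSigma e x)).1
    calc x ⊓ negSigma e x
        = sSup {k | IsClosedEl e k ∧ k ≤ x ⊓ negSigma e x} := h1
      _ ≤ ⊥ := by
        apply sSup_le
        rintro k ⟨hkc, hk⟩
        have hkx : k ≤ x := hk.trans inf_le_left
        have hkN : k ≤ negSigma e x := hk.trans inf_le_right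
        set V : Set B := {c | ∃ b : B, k ≤ e b ∧ c = bᶜ} with hV
        -- Step A : negSigma e x ≤ sSup (e '' V)
        have hA : negSigma e x ≤ sSup (e '' V) := by
          apply sSup_le
          rintro z ⟨p, q, hpc, hqo, hpx, hxq, rfl⟩
          have hpk : IsClosedEl e (p ⊔ k) :=
            closed_sup e hcompact hdense hbot htop hinf hsup hpc hkc
          obtain ⟨a, hpa, haq⟩ := linterp2 e hcompact hbot htop hinf hsup hpk hqo
            (sup_le (hpx.trans hxq) (hkx.trans hxq))
          have ha1 : sInf {w | ∃ a : B, p ≤ e a ∧ e a ≤ q ∧ w = e aᶜ} ≤ e aᶜ :=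
            sInf_le ⟨a, le_sup_left.trans hpa, haq, rfl⟩
          have ha2 : e aᶜ ≤ sSup (e '' V) :=
            le_sSup ⟨aᶜ, ⟨a, le_sup_right.trans hpa, rfl⟩, rfl⟩
          exact ha1.trans ha2
        -- Step B : k ≤ sSup (e '' V) forces k = ⊥
        obtain ⟨S, hSr⟩ := closed_repr e hkc
        obtain ⟨s, t, hsS, htV, hle⟩ := lcomp e hcompact S V
          (by rw [← hSr]; exact hkN.trans hA)
        have hks : k ≤ e (s.inf id) := by
          rw [e_finset_inf e htop hinf]
          exact Finset.le_inf fun a ha => hSr ▸ sInf_le ⟨a, hsS ha, rfl⟩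
        set d := t.inf compl with hd
        have hkd : k ≤ e d := by
          rw [hd, e_finset_inf e htop hinf]
          refine Finset.le_inf fun c hc => ?_
          obtain ⟨b, hb, rfl⟩ := htV hc
          simpa using hb
        have hsupc : t.sup id ≤ dᶜ := by
          refine Finset.sup_le fun c hc => ?_
          have : d ≤ cᶜ := (Finset.inf_le hc)
          simpa using compl_le_compl this
        have hfin : k ≤ e (d ⊓ dᶜ) := by
          rw [hinf]
          exact le_inf hkd (hks.trans (hle.trans (e.monotone hsupc)))
        simpa [inf_compl_eq_bot, hbot] using hfin
  · -- join part
    refine eq_top_iff.mpr ?_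
    have h2 := (hdense (x ⊔ negSigma e x)).2
    calc (⊤ : C)
        ≤ sInf {u | IsOpenEl e u ∧ x ⊔ negSigma e x ≤ u} := by
          apply le_sInf
          rintro u ⟨huo, hu⟩
          have hxu : x ≤ u := le_sup_left.trans hu
          have hNu : negSigma e x ≤ u := le_sup_right.trans hu
          set V : Set B := {c | ∃ a : B, e a ≤ u ∧ c = aᶜ} with hV
          have hzmem : sInf {w | ∃ a : B, (⊥ : C) ≤ e a ∧ e a ≤ u ∧ w = e aᶜ}
              ≤ negSigma e x := by
            apply le_sSup
            exact ⟨⊥, u, ⟨{⊥}, by simp [hbot]⟩, huo, bot_le, hxu, rfl⟩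
          have hWV : {w | ∃ a : B, (⊥ : C) ≤ e a ∧ e a ≤ u ∧ w = e aᶜ} = e '' V := by
            ext w
            constructor
            · rintro ⟨a, -, hau, rfl⟩; exact ⟨aᶜ, ⟨a, hau, rfl⟩, rfl⟩
            · rintro ⟨c, ⟨a, hau, rfl⟩, rfl⟩; exact ⟨a, bot_le, hau, rfl⟩
          obtain ⟨T, hTr⟩ := open_repr e huo
          obtain ⟨s, t, hsV, htT, hle⟩ := lcomp e hcompact V T
            (by rw [← hWV, ← hTr]; exact hzmem.trans hNu)
          have htopB : (⊤ : B) ≤ s.inf id ⊔ s.sup compl := by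
            rw [Finset.inf_sup_distrib_right]
            refine Finset.le_inf fun c hc => ?_
            have : cᶜ ≤ s.sup compl := Finset.le_sup hc
            calc (⊤ : B) = c ⊔ cᶜ := (sup_compl_eq_top).symm
              _ ≤ c ⊔ s.sup compl := sup_le_sup_left this c
          have h1 : e (t.sup id) ≤ u := by
            rw [e_finset_sup e hbot hsup]
            refine Finset.sup_le fun c hc => ?_
            rw [hTr]
            exact le_sSup ⟨c, htT hc, rfl⟩
          have h2' : e (s.sup compl) ≤ u := by
            rw [e_finset_sup e hbot hsup]
            refine Finset.sup_le fun c hc => ?_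
            obtain ⟨a, hau, rfl⟩ := hsV hc
            simpa using hau
          calc (⊤ : C) = e ⊤ := htop.symm
            _ ≤ e (s.inf id ⊔ s.sup compl) := e.monotone htopB
            _ = e (s.inf id) ⊔ e (s.sup compl) := hsup _ _
            _ ≤ e (t.sup id) ⊔ e (s.sup compl) := sup_le_sup_right hle _
            _ ≤ u := sup_le h1 h2'
      _ = x ⊔ negSigma e x := h2.symm
end
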